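/- arXiv:2409.20183 — 6 statements merged into one kernel-verified Lean document; each statement's English description precedes it below -/
import Mathlib

section
/- Let G be a finite simple graph, r a positive integer, and S a multiset of vertices such that G ⋆^r S is valid (S is independent and r-incident in G). Then: (i) the multiset 2S (doubling every multiplicity) is independent and (r+1)-incident in G, and G ⋆^{r+1} (2S) = G ⋆^r S; (ii) if r > 1, then S is (r−1)-incident in G and G ⋆^{r−1} S = G. -/
open Classical Real Matrix

noncomputable section

variable {V : Type} [Fintype V] [DecidableEq V]

/-- The number of edges of `G` with both endpoints in `A`. -/
def edgeCount (G : SimpleGraph V) (A : Finset V) : ℕ :=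
  (Finset.univ.filter (fun p : V × V => G.Adj p.1 p.2 ∧ p.1 ∈ A ∧ p.2 ∈ A)).card / 2

/-- The graph state `|G⟩`, as a vector in `ℂ^(V → {0,1})`. -/
def graphState (G : SimpleGraph V) : (V → Bool) → ℂ :=
  fun x => (-1 : ℂ) ^ edgeCount G (Finset.univ.filter (fun v => x v = true)) /
    (Real.sqrt (2 ^ Fintype.card V) : ℂ)

/-- The odd neighbourhood `Odd_G(D)` of a set `D` of vertices. -/
def oddNbhd (G : SimpleGraph V) (D : Finset V) : Finset V :=
  Finset.univ.filter (fun v => Odd ((D.filter (fun u => G.Adj v u)).card))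

/-- The operator `X_A` flipping the coordinates in `A`. -/
def Xop (A : Finset V) (ψ : (V → Bool) → ℂ) : (V → Bool) → ℂ :=
  fun x => ψ (fun v => if v ∈ A then !(x v) else x v)

/-- The operator `Z_A`. -/
def Zop (A : Finset V) (ψ : (V → Bool) → ℂ) : (V → Bool) → ℂ :=
  fun x => (-1 : ℂ) ^ ((A.filter (fun v => x v = true)).card) * ψ x

/-- The Pauli operator `𝒫_D^G = (−1)^{|G[D]|} X_D Z_{Odd_G(D)}`. -/
def pauliP (G : SimpleGraph V) (D : Finset V) (ψ : (V → Bool) → ℂ) : (V → Bool) → ℂ :=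
  fun x => (-1 : ℂ) ^ edgeCount G D * Xop D (Zop (oddNbhd G D) ψ) x

/-- Index of a Bool in `Fin 2`. -/
def boolIdx (b : Bool) : Fin 2 := if b then 1 else 0

/-- Action of a local (tensor-product) operator `⊗_u U_u` on the state space. -/
def applyLocal (U : V → Matrix (Fin 2) (Fin 2) ℂ) (ψ : (V → Bool) → ℂ) : (V → Bool) → ℂ :=
  fun x => ∑ y : V → Bool, (∏ u, U u (boolIdx (x u)) (boolIdx (y u))) * ψ y

/-- A local unitary: each single-qubit factor is unitary. -/
def IsLocalUnitary (U : V → Matrix (Fin 2) (Fin 2) ℂ) : Prop :=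
  ∀ u, U u ∈ Matrix.unitaryGroup (Fin 2) ℂ

def Xgate : Matrix (Fin 2) (Fin 2) ℂ := !![0, 1; 1, 0]

def Zgate : Matrix (Fin 2) (Fin 2) ℂ := !![1, 0; 0, -1]

def Ygate : Matrix (Fin 2) (Fin 2) ℂ := Complex.I • (Xgate * Zgate)

def Hgate : Matrix (Fin 2) (Fin 2) ℂ := (1 / (Real.sqrt 2 : ℂ)) • !![1, 1; 1, -1]

/-- The rotation `Z(α) = diag(1, e^{iα})`. -/
def Zrot (α : ℝ) : Matrix (Fin 2) (Fin 2) ℂ := !![1, 0; 0, Complex.exp (Complex.I * (α : ℂ))]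

/-- The rotation `X(α) = H Z(α) H`. -/
def Xrot (α : ℝ) : Matrix (Fin 2) (Fin 2) ℂ := Hgate * Zrot α * Hgate

/-- A 2×2 matrix is in the Pauli group. -/
def IsPauliGate (M : Matrix (Fin 2) (Fin 2) ℂ) : Prop :=
  ∃ z ∈ ({1, -1, Complex.I, -Complex.I} : Set ℂ),
    ∃ P ∈ ({1, Xgate, Ygate, Zgate} : Set (Matrix (Fin 2) (Fin 2) ℂ)), M = z • P

/-- A 2×2 unitary is Clifford if it maps `X` and `Z` to the Pauli group under conjugation. -/
def IsCliffordGate (C : Matrix (Fin 2) (Fin 2) ℂ) : Prop :=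
  C ∈ Matrix.unitaryGroup (Fin 2) ℂ ∧ IsPauliGate (C * Xgate * Cᴴ) ∧ IsPauliGate (C * Zgate * Cᴴ)

/-- The subgroup `LC_r` of 2×2 unitaries generated by `H` and `Z(π/2^r)`. -/
inductive InLCr (r : ℕ) : Matrix (Fin 2) (Fin 2) ℂ → Prop
  | H : InLCr r Hgate
  | Z : InLCr r (Zrot (π / 2 ^ r))
  | one : InLCr r 1
  | mul {A B : Matrix (Fin 2) (Fin 2) ℂ} : InLCr r A → InLCr r B → InLCr r (A * B)
  | inv {A : Matrix (Fin 2) (Fin 2) ℂ} : InLCr r A → InLCr r A⁻¹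

/-- Two states are LU-equivalent when some local unitary maps one to the other. -/
def LUequiv (ψ φ : (V → Bool) → ℂ) : Prop :=
  ∃ U : V → Matrix (Fin 2) (Fin 2) ℂ, IsLocalUnitary U ∧ φ = applyLocal U ψ

/-- Two states are `LC_r`-equivalent when some local unitary with all factors in `LC_r`
maps one to the other. -/
def LCrEquiv (r : ℕ) (ψ φ : (V → Bool) → ℂ) : Prop :=
  ∃ U : V → Matrix (Fin 2) (Fin 2) ℂ, (∀ u, InLCr r (U u)) ∧ φ = applyLocal U ψ

/-- Local complementation of `G` at a vertex `u`: `v ∼ w` iff `(v ∼_G w) XOR (v, w ∈ N_G(u))`. -/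
def localComp (G : SimpleGraph V) (u : V) : SimpleGraph V where
  Adj v w := v ≠ w ∧ ¬ (G.Adj v w ↔ G.Adj u v ∧ G.Adj u w)
  symm := by
    constructor
    intro v w h
    obtain ⟨h1, h2⟩ := h
    refine ⟨h1.symm, fun h => h2 ?_⟩
    rw [G.adj_comm w v] at h
    tauto
  loopless := ⟨fun v h => h.1 rfl⟩

/-- Local equivalence: related by a sequence of local complementations. -/
def LocalEquiv : SimpleGraph V → SimpleGraph V → Prop :=
  Relation.ReflTransGen (fun G G' => ∃ u, G' = localComp G u)

/-- The local Clifford operator `L_u^G = X_u(π/2) ⊗_{v ∈ N_G(u)} Z_v(−π/2)`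
implementing the local complementation at `u`. -/
def Lmat (G : SimpleGraph V) (u : V) : V → Matrix (Fin 2) (Fin 2) ℂ :=
  fun v => if v = u then Xrot (π / 2) else if G.Adj u v then Zrot (-(π / 2)) else 1

/-- The local Clifford operator implementing a sequence of local complementations:
`lcSeqOp G [a₁, …, a_m] = L_{a_m}^{G^{(m−1)}} ⋯ L_{a_1}^{G^{(0)}}` (pointwise products). -/
def lcSeqOp : SimpleGraph V → List V → V → Matrix (Fin 2) (Fin 2) ℂ
  | _, [] => fun _ => 1
  | G, a :: l => fun v => lcSeqOp (localComp G a) l v * Lmat G a v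

/-- The support of a multiset of vertices. -/
def msSupp (S : V → ℕ) : Finset V := Finset.univ.filter (fun u => 0 < S u)

/-- A multiset of vertices is independent in `G` when its support is an independent set. -/
def MsIndep (G : SimpleGraph V) (S : V → ℕ) : Prop :=
  ∀ u v, 0 < S u → 0 < S v → ¬ G.Adj u v

/-- `S • A = Σ_{u ∈ A} S(u)`. -/
def msDot (S : V → ℕ) (A : Finset V) : ℕ := ∑ u ∈ A, S u

/-- The common neighbourhood `Λ_G^K = ⋂_{u ∈ K} N_G(u)`. -/
def commonNbhd (G : SimpleGraph V) (K : Finset V) : Finset V :=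
  Finset.univ.filter (fun v => ∀ u ∈ K, G.Adj u v)

/-- The Kronecker delta `δ(0) = 1`, `δ(k) = 0` for `k > 0`. -/
def kdelta (k : ℕ) : ℕ := if k = 0 then 1 else 0

/-- `S` is `r`-incident in `G`. -/
def RIncident (G : SimpleGraph V) (r : ℕ) (S : V → ℕ) : Prop :=
  ∀ k < r, ∀ K : Finset V, (∀ u ∈ K, u ∉ msSupp S) → K.card = k + 2 →
    2 ^ (r - k - kdelta k) ∣ msDot S (commonNbhd G K)

/-- The `r`-local complementation `G ⋆^r S`. -/
def rLocalComp (G : SimpleGraph V) (r : ℕ) (S : V → ℕ) : SimpleGraph V where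
  Adj u v := u ≠ v ∧
    ¬ (G.Adj u v ↔ msDot S (commonNbhd G {u, v}) ≡ 2 ^ (r - 1) [MOD 2 ^ r])
  symm := by
    constructor
    intro u v h
    obtain ⟨h1, h2⟩ := h
    refine ⟨h1.symm, fun h => h2 ?_⟩
    rw [G.adj_comm v u, Finset.pair_comm v u] at h
    exact h
  loopless := ⟨fun u h => h.1 rfl⟩

/-- `G ⋆^r S` is valid when `S` is independent and `r`-incident. -/
def ValidRLC (G : SimpleGraph V) (r : ℕ) (S : V → ℕ) : Prop :=
  MsIndep G S ∧ RIncident G r S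

/-- `r`-local equivalence: related by a sequence of valid `r`-local complementations. -/
def RLocalEquiv (r : ℕ) : SimpleGraph V → SimpleGraph V → Prop :=
  Relation.ReflTransGen (fun G G' => ∃ S : V → ℕ, ValidRLC G r S ∧ G' = rLocalComp G r S)

/-- A local set of `G`: a nonempty set of the form `D ∪ Odd_G(D)`. -/
def IsLocalSet (G : SimpleGraph V) (L : Finset V) : Prop :=
  L.Nonempty ∧ ∃ D : Finset V, L = D ∪ oddNbhd G D

/-- A minimal local set of `G`. -/
def IsMLS (G : SimpleGraph V) (L : Finset V) : Prop :=
  IsLocalSet G L ∧ ∀ L' : Finset V, IsLocalSet G L' → L' ⊆ L → L' = L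

/-- A vertex has type X in `G`. -/
def HasTypeX (G : SimpleGraph V) (u : V) : Prop :=
  (∃ L, IsMLS G L ∧ u ∈ L) ∧
  ∀ L D : Finset V, IsMLS G L → u ∈ L → L = D ∪ oddNbhd G D → u ∈ D ∧ u ∉ oddNbhd G D

/-- A vertex has type Y in `G`. -/
def HasTypeY (G : SimpleGraph V) (u : V) : Prop :=
  (∃ L, IsMLS G L ∧ u ∈ L) ∧
  ∀ L D : Finset V, IsMLS G L → u ∈ L → L = D ∪ oddNbhd G D → u ∈ D ∧ u ∈ oddNbhd G D

/-- A vertex has type Z in `G`. -/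
def HasTypeZ (G : SimpleGraph V) (u : V) : Prop :=
  (∃ L, IsMLS G L ∧ u ∈ L) ∧
  ∀ L D : Finset V, IsMLS G L → u ∈ L → L = D ∪ oddNbhd G D → u ∉ D ∧ u ∈ oddNbhd G D

/-- A vertex has type ⊥ in `G`. -/
def HasTypeBot (G : SimpleGraph V) (u : V) : Prop :=
  ¬ HasTypeX G u ∧ ¬ HasTypeY G u ∧ ¬ HasTypeZ G u

/-- A graph on a linearly ordered vertex set is in standard form. -/
def StandardForm {W : Type} [Fintype W] [LinearOrder W] (G : SimpleGraph W) : Prop :=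
  (∀ u, ¬ HasTypeY G u) ∧
  ∀ u, HasTypeX G u → ∀ v, G.Adj u v → HasTypeZ G v ∧ u < v

/-- The `k`-subsets of `[1, t]`. -/
abbrev KSubsets (t k : ℕ) := {A : Finset (Fin t) // A.card = k}

/-- The vertex set of the graphs `C_{t,k}` and `C'_{t,k}`. -/
abbrev CtkVertex (t k : ℕ) := Fin t ⊕ KSubsets t k

/-- The bipartite graph `C_{t,k}`: `u ∈ [1,t]` is adjacent to a `k`-subset `A` iff `u ∈ A`. -/
def Ctk (t k : ℕ) : SimpleGraph (CtkVertex t k) :=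
  SimpleGraph.fromRel (fun x y =>
    ∃ (u : Fin t) (A : KSubsets t k), x = Sum.inl u ∧ y = Sum.inr A ∧ u ∈ A.1)

/-- The graph `C'_{t,k}`: `C_{t,k}` together with all edges between distinct elements of `[1,t]`. -/
def Ctk' (t k : ℕ) : SimpleGraph (CtkVertex t k) :=
  SimpleGraph.fromRel (fun x y =>
    (∃ (u : Fin t) (A : KSubsets t k), x = Sum.inl u ∧ y = Sum.inr A ∧ u ∈ A.1) ∨
    (∃ u v : Fin t, x = Sum.inl u ∧ y = Sum.inl v))

end

/-!
Doubling `S` doubles every `S • Λ^K`, so the `(r+1)`-incidence exponents of `2S` are those of `S`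
plus one, and the congruence `2x ≡ 2^r [MOD 2^(r+1)]` cancels to `x ≡ 2^(r-1) [MOD 2^r]`.
For the second part, the `k = 0` condition of `r`-incidence gives `2^(r-1) ∣ S • Λ^{u,v}` when
`u, v ∉ supp S`, while independence makes `S • Λ^{u,v} = 0` otherwise; a multiple of `2^(r-1)` is
never `≡ 2^(r-2) [MOD 2^(r-1)]`, so `G ⋆^(r-1) S` toggles no pair.
-/

section RLocalComp

variable {V : Type} {G : SimpleGraph V} {S : V → ℕ}

lemma msDot_two_mul (S : V → ℕ) (A : Finset V) :
    msDot (fun u => 2 * S u) A = 2 * msDot S A := by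
  simp only [msDot, Finset.mul_sum]

lemma MsIndep.two_mul (hS : MsIndep G S) : MsIndep G (fun u => 2 * S u) :=
  fun u v hu hv => hS u v (by simp only at hu; omega) (by simp only at hv; omega)

variable [Fintype V]

lemma msSupp_two_mul (S : V → ℕ) : msSupp (fun u => 2 * S u) = msSupp S := by
  ext u
  simp [msSupp]

variable [DecidableEq V]

lemma RIncident.two_mul {r : ℕ} (hS : RIncident G r S) :
    RIncident G (r + 1) (fun u => 2 * S u) := by
  intro k hk K hK hcard
  rw [msSupp_two_mul] at hK
  rw [msDot_two_mul]
  have hδ : kdelta k ≤ 1 := by unfold kdelta; split <;> omega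
  rcases Nat.lt_succ_iff_lt_or_eq.mp hk with hkr | rfl
  · have hδr : k + kdelta k ≤ r := by unfold kdelta; split <;> omega
    rw [show r + 1 - k - kdelta k = (r - k - kdelta k) + 1 by omega, pow_succ']
    exact mul_dvd_mul_left 2 (hS k hkr K hK hcard)
  · exact (pow_dvd_pow 2 (show _ ≤ 1 by omega)).trans (by rw [pow_one]; exact dvd_mul_right 2 _)

lemma RIncident.mono {r s : ℕ} (hS : RIncident G r S) (hsr : s ≤ r) : RIncident G s S :=
  fun k hk K hK hcard => (pow_dvd_pow 2 (by omega)).trans (hS k (by omega) K hK hcard)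

lemma rLocalComp_two_mul (G : SimpleGraph V) {r : ℕ} (hr : 0 < r) (S : V → ℕ) :
    rLocalComp G (r + 1) (fun u => 2 * S u) = rLocalComp G r S := by
  have hmod : ∀ x : ℕ,
      2 * x ≡ 2 ^ (r + 1 - 1) [MOD 2 ^ (r + 1)] ↔ x ≡ 2 ^ (r - 1) [MOD 2 ^ r] := by
    intro x
    rw [show r + 1 - 1 = (r - 1) + 1 by omega, pow_succ', pow_succ']
    exact Nat.ModEq.mul_left_cancel_iff' two_ne_zero
  ext u v
  simp only [rLocalComp, msDot_two_mul, hmod]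

lemma msDot_commonNbhd_eq_zero (hS : MsIndep G S) {K : Finset V} {u : V} (hu : u ∈ K)
    (hSu : 0 < S u) : msDot S (commonNbhd G K) = 0 := by
  refine Finset.sum_eq_zero fun w hw => ?_
  simp only [commonNbhd, Finset.mem_filter, Finset.mem_univ, true_and] at hw
  by_contra hSw
  exact hS u w hSu (Nat.pos_of_ne_zero hSw) (hw u hu)

lemma two_pow_dvd_msDot_commonNbhd_pair {r : ℕ} (hr : 0 < r) (hindep : MsIndep G S)
    (hinc : RIncident G r S) {u v : V} (huv : u ≠ v) :
    2 ^ (r - 1) ∣ msDot S (commonNbhd G {u, v}) := by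
  by_cases hsupp : 0 < S u ∨ 0 < S v
  · rcases hsupp with hSu | hSv
    · simp [msDot_commonNbhd_eq_zero hindep (Finset.mem_insert_self u {v}) hSu]
    · simp [msDot_commonNbhd_eq_zero hindep (Finset.mem_insert_of_mem
        (Finset.mem_singleton_self v)) hSv]
  · have hK : ∀ x ∈ ({u, v} : Finset V), x ∉ msSupp S := by
      intro x hx
      simp only [Finset.mem_insert, Finset.mem_singleton] at hx
      simp only [msSupp, Finset.mem_filter, Finset.mem_univ, true_and]
      rcases hx with rfl | rfl <;> omega
    simpa [kdelta] using hinc 0 hr {u, v} hK (Finset.card_pair huv)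

lemma not_modEq_two_pow_pred_of_dvd {s x : ℕ} (hs : 0 < s) (hx : 2 ^ s ∣ x) :
    ¬ x ≡ 2 ^ (s - 1) [MOD 2 ^ s] := by
  intro h
  have h0 : 2 ^ (s - 1) ≡ 0 [MOD 2 ^ s] := h.symm.trans (Nat.modEq_zero_iff_dvd.mpr hx)
  have := (Nat.pow_dvd_pow_iff_le_right one_lt_two).mp (Nat.modEq_zero_iff_dvd.mp h0)
  omega

lemma rLocalComp_eq_self_of_lt {r s : ℕ} (hindep : MsIndep G S) (hinc : RIncident G r S)
    (hs : 0 < s) (hsr : s < r) : rLocalComp G s S = G := by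
  ext u v
  by_cases huv : u = v
  · subst huv
    simp
  have hdvd : 2 ^ s ∣ msDot S (commonNbhd G {u, v}) :=
    (pow_dvd_pow 2 (by omega)).trans
      (two_pow_dvd_msDot_commonNbhd_pair (by omega) hindep hinc huv)
  simp only [rLocalComp, ne_eq, huv, not_false_eq_true, true_and,
    iff_false_intro (not_modEq_two_pow_pred_of_dvd hs hdvd), iff_false, not_not]

end RLocalComp

theorem stmt_2 {V : Type} [Fintype V] [DecidableEq V] (G : SimpleGraph V) (r : ℕ) (hr : 0 < r)
    (S : V → ℕ) (h : ValidRLC G r S) :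
    (ValidRLC G (r + 1) (fun u => 2 * S u) ∧
      rLocalComp G (r + 1) (fun u => 2 * S u) = rLocalComp G r S) ∧
    (1 < r → RIncident G (r - 1) S ∧ rLocalComp G (r - 1) S = G) := by
  obtain ⟨hindep, hinc⟩ := h
  exact ⟨⟨⟨hindep.two_mul, hinc.two_mul⟩, rLocalComp_two_mul G hr S⟩,
    fun hr1 => ⟨hinc.mono (Nat.sub_le r 1),
      rLocalComp_eq_self_of_lt hindep hinc (by omega) (by omega)⟩⟩
end

section
/- Let G be a finite simple graph, r a positive integer, and S a multiset of vertices such that G ⋆^r S is valid. Then for every vertex u ∈ supp(S), the neighbourhood of u in G ⋆^r S equals its neighbourhood in G: N_{G ⋆^r S}(u) = N_G(u). -/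
open Classical Real Matrix

section RLocalComp

variable {V : Type} [Fintype V] [DecidableEq V]

lemma msDot_commonNbhd_eq_zero_of_mem {G : SimpleGraph V} {S : V → ℕ} (hS : MsIndep G S)
    {u : V} (hu : 0 < S u) {K : Finset V} (huK : u ∈ K) : msDot S (commonNbhd G K) = 0 := by
  refine Finset.sum_eq_zero fun w hw => Nat.eq_zero_of_not_pos fun hw₀ => ?_
  exact hS u w hu hw₀ ((Finset.mem_filter.mp hw).2 u huK)

lemma Nat.not_zero_modEq_two_pow_pred {r : ℕ} (hr : 0 < r) : ¬ 0 ≡ 2 ^ (r - 1) [MOD 2 ^ r] := by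
  rw [Nat.ModEq, Nat.zero_mod, Nat.mod_eq_of_lt (Nat.pow_lt_pow_right one_lt_two (by omega))]
  exact (pow_pos two_pos _).ne

lemma rLocalComp_adj_iff_of_not_modEq {G : SimpleGraph V} {r : ℕ} {S : V → ℕ} {u v : V}
    (h : ¬ msDot S (commonNbhd G {u, v}) ≡ 2 ^ (r - 1) [MOD 2 ^ r]) :
    (rLocalComp G r S).Adj u v ↔ G.Adj u v := by
  constructor
  · rintro ⟨-, hxor⟩
    by_contra hG
    exact hxor (iff_of_false hG h)
  · exact fun hG => ⟨hG.ne, fun hiff => h (hiff.mp hG)⟩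

end RLocalComp

theorem stmt_3 {V : Type} [Fintype V] [DecidableEq V] (G : SimpleGraph V) (r : ℕ) (hr : 0 < r)
    (S : V → ℕ) (h : ValidRLC G r S) (u : V) (hu : u ∈ msSupp S) :
    (rLocalComp G r S).neighborSet u = G.neighborSet u := by
  have hSu : 0 < S u := (Finset.mem_filter.mp hu).2
  ext v
  apply rLocalComp_adj_iff_of_not_modEq
  rw [msDot_commonNbhd_eq_zero_of_mem h.1 hSu (Finset.mem_insert_self u {v})]
  exact Nat.not_zero_modEq_two_pow_pred hr
end

section
/- For any finite simple graph G = (V, E), any subset K ⊆ V, and any multiset S : V → ℕ of vertices, the following identity holds in ℤ: S • Odd_G(K) = Σ_{R ⊆ K, R ≠ ∅} (−2)^{|R|−1} · (S • Λ_G^R). -/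
open Classical Real Matrix

/-! Fix a vertex `v` and let `M = K ∩ N(v)`. Since `∑_{R ⊆ M} (-2)^|R| = (1 - 2)^|M|`, the sum
`∑_{∅ ≠ R ⊆ M} (-2)^(|R|-1)` equals `(1 - (-1)^|M|) / 2`, the indicator of `|M|` being odd.
Weighting by `S v`, summing over `v` and exchanging the two sums gives the identity, as `R ⊆ N(v)`
exactly when `v ∈ Λ^R`. -/

open Finset

theorem Finset.sum_powerset_neg_two_pow {α : Type*} (M : Finset α) :
    ∑ R ∈ M.powerset, (-2 : ℤ) ^ #R = (-1) ^ #M := by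
  simpa using sum_pow_mul_eq_add_pow (-2 : ℤ) 1 M

theorem Finset.sum_powerset_nonempty_neg_two_pow_pred {α : Type*} (M : Finset α) :
    ∑ R ∈ M.powerset with R.Nonempty, (-2 : ℤ) ^ (#R - 1) = if Odd #M then 1 else 0 := by
  have h : -2 * ∑ R ∈ M.powerset with R.Nonempty, (-2 : ℤ) ^ (#R - 1) = (-1) ^ #M - 1 := by
    have hempty : ∑ R ∈ M.powerset with ¬R.Nonempty, (-2 : ℤ) ^ #R = 1 := by
      simp [not_nonempty_iff_eq_empty, filter_eq']
    rw [← sum_powerset_neg_two_pow, ← sum_filter_add_sum_filter_not M.powerset (·.Nonempty),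
      hempty, add_sub_cancel_right, mul_sum]
    refine sum_congr rfl fun R hR => ?_
    rw [← pow_succ', Nat.sub_add_cancel (card_pos.2 (mem_filter.1 hR).2)]
  split_ifs with hM
  · rw [hM.neg_one_pow] at h; linarith
  · rw [(Nat.not_odd_iff_even.mp hM).neg_one_pow] at h; linarith

theorem Finset.sum_filter_odd_card_eq_sum_powerset {α β : Type*} (K : Finset α) (s : Finset β)
    (r : α → β → Prop) [DecidableRel r] (f : β → ℤ) :
    ∑ v ∈ s with Odd #{u ∈ K | r u v}, f v =
      ∑ R ∈ K.powerset with R.Nonempty, (-2) ^ (#R - 1) * ∑ v ∈ s with ∀ u ∈ R, r u v, f v := by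
  have hsubsets (v : β) : {R ∈ K.powerset | R.Nonempty}.filter (fun R => ∀ u ∈ R, r u v) =
      {R ∈ {u ∈ K | r u v}.powerset | R.Nonempty} := by
    ext R
    simp only [mem_filter, mem_powerset, subset_iff]
    grind
  calc ∑ v ∈ s with Odd #{u ∈ K | r u v}, f v
      = ∑ v ∈ s, (∑ R ∈ {u ∈ K | r u v}.powerset with R.Nonempty, (-2) ^ (#R - 1)) * f v := by
        rw [sum_filter]
        simp only [sum_powerset_nonempty_neg_two_pow_pred, ite_mul, one_mul, zero_mul]
    _ = ∑ v ∈ s, ∑ R ∈ K.powerset with R.Nonempty,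
          if ∀ u ∈ R, r u v then (-2) ^ (#R - 1) * f v else 0 := by
        simp only [← sum_filter, hsubsets, sum_mul]
    _ = _ := by
        rw [sum_comm]
        simp only [mul_sum, sum_filter, mul_ite, mul_zero]

theorem stmt_6 {V : Type} [Fintype V] [DecidableEq V] (G : SimpleGraph V) (K : Finset V)
    (S : V → ℕ) :
    (msDot S (oddNbhd G K) : ℤ) =
      ∑ R ∈ K.powerset.filter (fun R => R.Nonempty),
        (-2 : ℤ) ^ (R.card - 1) * (msDot S (commonNbhd G R) : ℤ) := by
  simp only [msDot, oddNbhd, commonNbhd, Nat.cast_sum]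
  convert sum_filter_odd_card_eq_sum_powerset K univ G.Adj (fun v => (S v : ℤ)) using 5 with v
  exact filter_congr fun u _ => G.adj_comm v u
end

section
/- Let G and G' be finite simple graphs on the same vertex set V, and let U be a local unitary with |G⟩ = U |G'⟩. Let L ⊆ V be a set that is a minimal local set of G whose unique generator is D, and also a minimal local set of G' whose unique generator is D'. Then 𝒫_D^G U = U 𝒫_{D'}^{G'} as operators on ℂ^{(V → {0,1})}. -/
open Classical Real Matrix

/-!
The operators `𝒫_E^G` (`E ⊆ V`) sum to `2ⁿ |G⟩⟨G|`: the only nonzero entries of `𝒫_E^G` sit at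
`(x, x ⊕ E)`, and their signs agree with those of `|G⟩⟨G|` because the edge count is a quadratic
form over `𝔽₂` with polarisation `(A, B) ↦ |A ∩ Odd(B)|`. Hence `|G⟩ = U |G'⟩` gives
`∑_E 𝒫_E^G = U (∑_E 𝒫_E^{G'}) U†`.

Completely depolarising every qubit outside `L` kills an operator `⊗_u f_u` having a traceless
factor outside `L`, and fixes it if all its factors outside `L` are `1`. Both `𝒫_E^G` and
`U 𝒫_E^{G'} U†` are of one of these two kinds, according to whether their support `E ∪ Odd(E)`
lies in `L`. As `L` is a minimal local set with a unique generator, only `E = ∅` and `E = D`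
(resp. `D'`) survive, leaving `1 + 𝒫_D^G = 1 + U 𝒫_{D'}^{G'} U†`.
-/

open Finset
open scoped symmDiff

namespace Finset

variable {α : Type*} [DecidableEq α]

theorem card_symmDiff_add_two_mul_card_inter (s t : Finset α) :
    #(s ∆ t) + 2 * #(s ∩ t) = #s + #t := by
  rw [symmDiff_eq_sup_sdiff_inf, sup_eq_union, inf_eq_inter,
    card_sdiff_of_subset (inter_subset_union), ← card_union_add_card_inter]
  have := card_le_card (inter_subset_union (s := s) (t := t))
  omega

theorem natCast_card_symmDiff_zmod_two (s t : Finset α) :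
    (#(s ∆ t) : ZMod 2) = #s + #t := by
  have h := congrArg (Nat.cast : ℕ → ZMod 2) (card_symmDiff_add_two_mul_card_inter s t)
  push_cast at h
  rwa [show (2 : ZMod 2) = 0 from rfl, zero_mul, add_zero] at h

end Finset

theorem neg_one_pow_eq_of_zmod_two {R : Type*} [Ring R] {a b : ℕ}
    (h : (a : ZMod 2) = b) : (-1 : R) ^ a = (-1) ^ b := by
  rw [neg_one_pow_eq_pow_mod_two, (ZMod.natCast_eq_natCast_iff' a b 2).mp h,
    ← neg_one_pow_eq_pow_mod_two]

noncomputable section Parity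

variable {V : Type} (G : SimpleGraph V)

def degIn (v : V) (A : Finset V) : ℕ := #(A.filter (G.Adj v))

theorem mem_oddNbhd [Fintype V] {D : Finset V} {v : V} :
    v ∈ oddNbhd G D ↔ Odd (degIn G v D) := by
  simp [oddNbhd, degIn]

@[simp] theorem oddNbhd_empty [Fintype V] : oddNbhd G ∅ = ∅ := by
  ext v; simp [oddNbhd]

variable [DecidableEq V]

theorem degIn_insert {u v : V} {A : Finset V} (hv : v ∉ A) :
    degIn G u (insert v A) = degIn G u A + if G.Adj u v then 1 else 0 := by
  unfold degIn
  rw [filter_insert]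
  split_ifs with h
  · rw [card_insert_of_notMem (fun h' => hv (mem_filter.mp h').1)]
  · rfl

theorem degIn_erase_self (v : V) (A : Finset V) : degIn G v (A.erase v) = degIn G v A := by
  rw [degIn, degIn, filter_erase, erase_eq_of_notMem]
  simp

theorem natCast_degIn_symmDiff (v : V) (A B : Finset V) :
    (degIn G v (A ∆ B) : ZMod 2) = degIn G v A + degIn G v B := by
  rw [degIn, show (A ∆ B).filter (G.Adj v) = A.filter (G.Adj v) ∆ B.filter (G.Adj v) by
    ext; simp [mem_symmDiff]; tauto, natCast_card_symmDiff_zmod_two]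
  rfl

theorem sum_degIn_insert {v : V} {A : Finset V} (hv : v ∉ A) :
    ∑ u ∈ insert v A, degIn G u (insert v A) = ∑ u ∈ A, degIn G u A + 2 * degIn G v A := by
  rw [sum_insert hv, degIn_insert G hv]
  simp only [degIn_insert G hv, sum_add_distrib, G.loopless.irrefl, if_false, add_zero]
  have : ∑ u ∈ A, (if G.Adj u v then 1 else 0) = degIn G v A := by
    simp only [degIn, card_filter, G.adj_comm]
  omega

theorem even_sum_degIn (A : Finset V) : Even (∑ u ∈ A, degIn G u A) := by
  induction A using Finset.induction_on with
  | empty => simp only [sum_empty, Even.zero]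
  | insert v A hv ih =>
    rw [sum_degIn_insert G hv]
    exact ih.add (even_two_mul _)

variable [Fintype V]

theorem edgeCount_eq_sum_degIn (A : Finset V) :
    edgeCount G A = (∑ u ∈ A, degIn G u A) / 2 := by
  rw [edgeCount]
  congr 1
  rw [show univ.filter (fun p : V × V => G.Adj p.1 p.2 ∧ p.1 ∈ A ∧ p.2 ∈ A)
      = (A ×ˢ A).filter (fun p => G.Adj p.1 p.2) by ext; simp; tauto,
    card_filter, sum_product]
  simp only [degIn, card_filter]

theorem edgeCount_insert {v : V} {A : Finset V} (hv : v ∉ A) :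
    edgeCount G (insert v A) = edgeCount G A + degIn G v A := by
  rw [edgeCount_eq_sum_degIn, edgeCount_eq_sum_degIn, sum_degIn_insert G hv]
  obtain ⟨k, hk⟩ := even_sum_degIn G A
  omega

@[simp] theorem edgeCount_empty : edgeCount G ∅ = 0 := by
  simp [edgeCount_eq_sum_degIn]

theorem natCast_edgeCount_symmDiff_singleton (C : Finset V) (v : V) :
    (edgeCount G (C ∆ {v}) : ZMod 2) = edgeCount G C + degIn G v C := by
  by_cases hv : v ∈ C
  · obtain ⟨C, hvC, rfl⟩ : ∃ C', v ∉ C' ∧ C = insert v C' :=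
      ⟨C.erase v, notMem_erase v C, (insert_erase hv).symm⟩
    rw [show insert v C ∆ {v} = C by ext; simp [mem_symmDiff]; grind,
      edgeCount_insert G hvC, ← degIn_erase_self G v (insert v C), erase_insert hvC]
    push_cast
    rw [add_assoc, ← two_mul, show (2 : ZMod 2) = 0 from rfl, zero_mul, add_zero]
  · rw [show C ∆ {v} = insert v C by ext; simp [mem_symmDiff]; grind, edgeCount_insert G hv]
    push_cast; rfl

theorem natCast_card_inter_oddNbhd_insert (A B : Finset V) {v : V} (hv : v ∉ B) :
    (#(A ∩ oddNbhd G (insert v B)) : ZMod 2) = #(A ∩ oddNbhd G B) + degIn G v A := by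
  have : A ∩ oddNbhd G (insert v B) = (A ∩ oddNbhd G B) ∆ A.filter (G.Adj v) := by
    ext u
    simp only [mem_inter, mem_symmDiff, mem_filter, mem_oddNbhd, degIn_insert G hv,
      G.adj_comm v u]
    split_ifs <;> simp [Nat.odd_add_one, Nat.not_odd_iff_even] <;> tauto
  rw [this, natCast_card_symmDiff_zmod_two]
  rfl

theorem natCast_edgeCount_symmDiff (A B : Finset V) :
    (edgeCount G (A ∆ B) : ZMod 2) = edgeCount G A + edgeCount G B + #(A ∩ oddNbhd G B) := by
  induction B using Finset.induction_on with
  | empty => simp [show A ∆ ∅ = A from symmDiff_bot A]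
  | insert v B hv ih =>
    rw [show A ∆ insert v B = (A ∆ B) ∆ {v} by ext; simp [mem_symmDiff]; grind,
      natCast_edgeCount_symmDiff_singleton, ih, natCast_degIn_symmDiff, edgeCount_insert G hv,
      natCast_card_inter_oddNbhd_insert G A B hv]
    push_cast; ring

end Parity

theorem boolIdx_bijective : Function.Bijective boolIdx := by decide

theorem isLocalUnitary_one {V : Type} : IsLocalUnitary (1 : V → Matrix (Fin 2) (Fin 2) ℂ) :=
  fun _ => one_mem _

section Tensor

variable {V : Type} [Fintype V]

def tensor (f : V → Matrix (Fin 2) (Fin 2) ℂ) : Matrix (V → Bool) (V → Bool) ℂ :=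
  Matrix.of fun x y => ∏ u, f u (boolIdx (x u)) (boolIdx (y u))

theorem tensor_apply (f : V → Matrix (Fin 2) (Fin 2) ℂ) (x y : V → Bool) :
    tensor f x y = ∏ u, f u (boolIdx (x u)) (boolIdx (y u)) := rfl

theorem conjTranspose_tensor (f : V → Matrix (Fin 2) (Fin 2) ℂ) :
    (tensor f)ᴴ = tensor fun u => (f u)ᴴ := by
  ext x y
  simp [tensor_apply, Matrix.conjTranspose_apply]

@[simp] theorem tensor_one : tensor (1 : V → Matrix (Fin 2) (Fin 2) ℂ) = 1 := by
  ext x y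
  by_cases hxy : x = y
  · subst hxy; simp [tensor_apply]
  · obtain ⟨u, hu⟩ := Function.ne_iff.mp hxy
    rw [tensor_apply, prod_eq_zero (mem_univ u), Matrix.one_apply_ne hxy]
    exact Matrix.one_apply_ne (boolIdx_bijective.1.ne hu)

variable [DecidableEq V]

theorem applyLocal_eq_mulVec (U : V → Matrix (Fin 2) (Fin 2) ℂ) (ψ : (V → Bool) → ℂ) :
    applyLocal U ψ = tensor U *ᵥ ψ := rfl

theorem tensor_mul (f g : V → Matrix (Fin 2) (Fin 2) ℂ) :
    tensor f * tensor g = tensor (f * g) := by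
  ext x y
  have hsum : ∀ u, (f u * g u) (boolIdx (x u)) (boolIdx (y u))
      = ∑ b : Bool, f u (boolIdx (x u)) (boolIdx b) * g u (boolIdx b) (boolIdx (y u)) :=
    fun u => by
      rw [Matrix.mul_apply]
      exact (Fintype.sum_bijective boolIdx boolIdx_bijective _ _ fun _ => rfl).symm
  simp only [Matrix.mul_apply, tensor_apply, Pi.mul_apply, hsum, Fintype.prod_sum,
    ← prod_mul_distrib]

theorem tensor_mul_conjTranspose {U : V → Matrix (Fin 2) (Fin 2) ℂ} (hU : IsLocalUnitary U) :
    tensor U * (tensor U)ᴴ = 1 := by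
  rw [conjTranspose_tensor, tensor_mul, ← tensor_one]
  exact congrArg tensor (funext fun u => Matrix.mem_unitaryGroup_iff.mp (hU u))

theorem conjTranspose_tensor_mul {U : V → Matrix (Fin 2) (Fin 2) ℂ} (hU : IsLocalUnitary U) :
    (tensor U)ᴴ * tensor U = 1 := by
  rw [conjTranspose_tensor, tensor_mul, ← tensor_one]
  exact congrArg tensor (funext fun u => Matrix.mem_unitaryGroup_iff'.mp (hU u))

theorem tensor_update_apply (f : V → Matrix (Fin 2) (Fin 2) ℂ) (u : V)
    (m : Matrix (Fin 2) (Fin 2) ℂ) (x y : V → Bool) :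
    tensor (Function.update f u m) x y
      = m (boolIdx (x u)) (boolIdx (y u)) * ∏ v ∈ {u}ᶜ, f v (boolIdx (x v)) (boolIdx (y v)) := by
  rw [tensor_apply, Fintype.prod_eq_mul_prod_compl u, Function.update_self]
  congr 1
  exact prod_congr rfl fun v hv => by rw [Function.update_of_ne (by simpa using hv)]

theorem tensor_update_mul_tensor_mul_tensor_update (f : V → Matrix (Fin 2) (Fin 2) ℂ) (u : V)
    (p q : Matrix (Fin 2) (Fin 2) ℂ) :
    tensor (Function.update 1 u p) * tensor f * tensor (Function.update 1 u q)
      = tensor (Function.update f u (p * f u * q)) := by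
  rw [tensor_mul, tensor_mul]
  congr 1
  funext v
  by_cases hv : v = u
  · subst hv; simp
  · simp [hv]

end Tensor

section SingleQubit

def xzPauli (a b : Bool) : Matrix (Fin 2) (Fin 2) ℂ :=
  (if a then Xgate else 1) * (if b then Zgate else 1)

theorem xzPauli_apply (a b i j : Bool) :
    xzPauli a b (boolIdx i) (boolIdx j)
      = if j = xor i a then (if b && j then -1 else 1) else 0 := by
  cases a <;> cases b <;> cases i <;> cases j <;>
    simp [xzPauli, Xgate, Zgate, boolIdx]

@[simp] theorem xzPauli_false_false : xzPauli false false = 1 := by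
  simp [xzPauli]

theorem trace_xzPauli {a b : Bool} (h : a = true ∨ b = true) : (xzPauli a b).trace = 0 := by
  cases a <;> cases b <;> simp_all [xzPauli, Xgate, Zgate, Matrix.trace, Fin.sum_univ_two]

theorem sum_xzPauli_mul_mul_conjTranspose (m : Matrix (Fin 2) (Fin 2) ℂ) :
    ∑ a : Bool, ∑ b : Bool, xzPauli a b * m * (xzPauli a b)ᴴ = (2 * m.trace) • 1 := by
  ext i j
  fin_cases i <;> fin_cases j <;>
    · simp [xzPauli, Xgate, Zgate, Matrix.mul_apply, Fin.sum_univ_two,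
        Matrix.trace, Matrix.vecMul, dotProduct, Matrix.conjTranspose_apply]
      try ring

end SingleQubit

noncomputable section PauliString

variable {V : Type} [Fintype V] [DecidableEq V] (G : SimpleGraph V)

def pauliMatrix (E : Finset V) : Matrix (V → Bool) (V → Bool) ℂ :=
  (-1 : ℂ) ^ edgeCount G E • tensor fun u => xzPauli (u ∈ E) (u ∈ oddNbhd G E)

def flipAt (E : Finset V) (x : V → Bool) : V → Bool := fun v => if v ∈ E then !(x v) else x v

def trueSet (x : V → Bool) : Finset V := univ.filter fun v => x v = true

theorem eq_flipAt_iff {E : Finset V} {x y : V → Bool} :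
    y = flipAt E x ↔ E = trueSet x ∆ trueSet y := by
  simp only [funext_iff, Finset.ext_iff, flipAt, trueSet, mem_symmDiff, mem_filter, mem_univ,
    true_and]
  refine forall_congr' fun v => ?_
  by_cases hv : v ∈ E <;> cases x v <;> cases y v <;> simp [hv]

theorem pauliMatrix_apply (E : Finset V) (x y : V → Bool) :
    pauliMatrix G E x y = if y = flipAt E x then
      (-1 : ℂ) ^ edgeCount G E * (-1) ^ #((oddNbhd G E).filter fun v => y v = true) else 0 := by
  rw [pauliMatrix, Matrix.smul_apply, tensor_apply, smul_eq_mul]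
  simp only [xzPauli_apply]
  split_ifs with hy
  · rw [prod_ite_of_true (fun u _ => by subst hy; by_cases u ∈ E <;> simp [flipAt, *]),
      prod_ite, prod_const, prod_const, one_pow, mul_one]
    congr 3
    ext v; simp
  · obtain ⟨u, hu⟩ := Function.ne_iff.mp hy
    have hu' : ¬y u = xor (x u) (u ∈ E) := by by_cases u ∈ E <;> simp_all [flipAt]
    rw [prod_eq_zero (mem_univ u) (if_neg hu'), mul_zero]

theorem pauliP_eq_mulVec (E : Finset V) (ψ : (V → Bool) → ℂ) :
    pauliP G E ψ = pauliMatrix G E *ᵥ ψ := by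
  funext x
  simp only [Matrix.mulVec, dotProduct, pauliMatrix_apply, ite_mul, zero_mul, sum_ite_eq',
    mem_univ, if_true, pauliP, Xop, Zop, mul_assoc]
  rfl

@[simp] theorem pauliMatrix_empty : pauliMatrix G ∅ = 1 := by
  simp [pauliMatrix, ← Pi.one_def]

theorem graphState_mul_graphState (x y : V → Bool) :
    graphState G x * graphState G y
      = (-1 : ℂ) ^ (edgeCount G (trueSet x) + edgeCount G (trueSet y)) / 2 ^ Fintype.card V := by
  have hsq : ((√(2 ^ Fintype.card V) : ℝ) : ℂ) * (√(2 ^ Fintype.card V) : ℝ)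
      = 2 ^ Fintype.card V := by
    rw [← Complex.ofReal_mul, Real.mul_self_sqrt (by positivity)]
    push_cast; rfl
  rw [graphState, graphState, div_mul_div_comm, hsq, pow_add]
  rfl

theorem star_graphState : star (graphState G) = graphState G := by
  funext x
  simp [graphState, Complex.conj_ofReal]

theorem vecMulVec_graphState_eq_conj {G' : SimpleGraph V} {U : V → Matrix (Fin 2) (Fin 2) ℂ}
    (h : graphState G = applyLocal U (graphState G')) :
    Matrix.vecMulVec (graphState G) (graphState G)
      = tensor U * Matrix.vecMulVec (graphState G') (graphState G') * (tensor U)ᴴ := by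
  nth_rw 2 [← star_graphState G]
  rw [h, applyLocal_eq_mulVec, Matrix.star_mulVec, Matrix.mul_vecMulVec, Matrix.vecMulVec_mul,
    star_graphState]

theorem sum_pauliMatrix :
    ∑ E, pauliMatrix G E
      = (2 ^ Fintype.card V : ℂ) • Matrix.vecMulVec (graphState G) (graphState G) := by
  ext x y
  simp only [Matrix.sum_apply, pauliMatrix_apply, eq_flipAt_iff, sum_ite_eq', mem_univ, if_true,
    Matrix.smul_apply, Matrix.vecMulVec_apply, graphState_mul_graphState, smul_eq_mul]
  rw [mul_div_cancel₀ _ (pow_ne_zero _ two_ne_zero), ← pow_add]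
  apply neg_one_pow_eq_of_zmod_two
  have h := natCast_edgeCount_symmDiff G (trueSet y) (trueSet x ∆ trueSet y)
  rw [symmDiff_comm, symmDiff_symmDiff_cancel_right] at h
  rw [show (oddNbhd G _).filter (fun v => y v = true)
      = trueSet y ∩ oddNbhd G (trueSet x ∆ trueSet y) by ext; simp [trueSet, and_comm]]
  push_cast
  linear_combination -h - CharTwo.add_self_eq_zero (edgeCount G (trueSet y) : ZMod 2)

end PauliString

noncomputable section Depolarize

variable {V : Type} [Fintype V] [DecidableEq V]

def depolarize (u : V) : Module.End ℂ (Matrix (V → Bool) (V → Bool) ℂ) :=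
  (4 : ℂ)⁻¹ • ∑ a : Bool, ∑ b : Bool,
    LinearMap.mulLeft ℂ (tensor (Function.update 1 u (xzPauli a b))) *
      LinearMap.mulRight ℂ (tensor (Function.update 1 u (xzPauli a b)ᴴ))

theorem depolarize_tensor (u : V) (f : V → Matrix (Fin 2) (Fin 2) ℂ) :
    depolarize u (tensor f) = ((f u).trace / 2) • tensor (Function.update f u 1) := by
  have hconj : depolarize u (tensor f) = (4 : ℂ)⁻¹ • ∑ a : Bool, ∑ b : Bool,
      tensor (Function.update f u (xzPauli a b * f u * (xzPauli a b)ᴴ)) := by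
    simp only [depolarize, LinearMap.smul_apply, LinearMap.sum_apply, Module.End.mul_apply,
      LinearMap.mulLeft_apply, LinearMap.mulRight_apply, ← mul_assoc,
      tensor_update_mul_tensor_mul_tensor_update]
  ext x y
  simp only [hconj, Matrix.smul_apply, Matrix.sum_apply, tensor_update_apply, ← Finset.sum_mul,
    smul_eq_mul]
  simp only [← Matrix.sum_apply, sum_xzPauli_mul_mul_conjTranspose, Matrix.smul_apply,
    smul_eq_mul]
  ring

def depolarizeOutside (L : Finset V) : Module.End ℂ (Matrix (V → Bool) (V → Bool) ℂ) :=
  ((univ \ L).toList.map depolarize).prod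

theorem list_prod_map_depolarize_tensor (S : Finset V) {f : V → Matrix (Fin 2) (Fin 2) ℂ}
    (hf_one : ∀ u ∉ S, f u = 1) (hf_trace : ∀ u ∈ S, (f u).trace = 0) (l : List V) :
    (l.map depolarize).prod (tensor f) = if ∀ u ∈ l, u ∉ S then tensor f else 0 := by
  induction l with
  | nil => simp
  | cons u l ih =>
    rw [List.map_cons, List.prod_cons, Module.End.mul_apply, ih]
    by_cases hl : ∀ v ∈ l, v ∉ S
    · rw [if_pos hl, depolarize_tensor]
      by_cases hu : u ∈ S
      · rw [hf_trace u hu, zero_div, zero_smul, if_neg fun h => h u List.mem_cons_self hu]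
      · rw [if_pos fun v hv => (List.mem_cons.1 hv).elim (· ▸ hu) (hl v),
          Function.update_eq_self_iff.mpr (hf_one u hu).symm, hf_one u hu]
        norm_num
    · rw [if_neg hl, map_zero, if_neg fun h => hl fun v hv => h v (List.mem_cons_of_mem u hv)]

theorem depolarizeOutside_tensor (L S : Finset V) {f : V → Matrix (Fin 2) (Fin 2) ℂ}
    (hf_one : ∀ u ∉ S, f u = 1) (hf_trace : ∀ u ∈ S, (f u).trace = 0) :
    depolarizeOutside L (tensor f) = if S ⊆ L then tensor f else 0 := by
  rw [depolarizeOutside, list_prod_map_depolarize_tensor S hf_one hf_trace]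
  congr 1
  simp only [mem_toList, mem_sdiff, mem_univ, true_and, eq_iff_iff]
  exact ⟨fun h v hv => not_not.mp fun hvL => h v hvL hv, fun h v hvL hv => hvL (h hv)⟩

end Depolarize

section MinimalLocalSets

variable {V : Type} [Fintype V] [DecidableEq V] {G : SimpleGraph V}

theorem conj_pauliMatrix (W : V → Matrix (Fin 2) (Fin 2) ℂ) (E : Finset V) :
    tensor W * pauliMatrix G E * (tensor W)ᴴ = (-1 : ℂ) ^ edgeCount G E •
      tensor fun u => W u * xzPauli (u ∈ E) (u ∈ oddNbhd G E) * (W u)ᴴ := by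
  rw [pauliMatrix, Matrix.mul_smul, Matrix.smul_mul, conjTranspose_tensor, tensor_mul, tensor_mul]
  rfl

theorem depolarizeOutside_conj_pauliMatrix {W : V → Matrix (Fin 2) (Fin 2) ℂ}
    (hW : IsLocalUnitary W) (L E : Finset V) :
    depolarizeOutside L (tensor W * pauliMatrix G E * (tensor W)ᴴ)
      = if E ∪ oddNbhd G E ⊆ L then tensor W * pauliMatrix G E * (tensor W)ᴴ else 0 := by
  rw [conj_pauliMatrix, map_smul, depolarizeOutside_tensor L (E ∪ oddNbhd G E)]
  · split_ifs <;> simp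
  · intro u hu
    simp only [mem_union, not_or] at hu
    simp [hu.1, hu.2, ← Matrix.star_eq_conjTranspose, Matrix.mem_unitaryGroup_iff.mp (hW u)]
  · intro u hu
    rw [Matrix.trace_mul_cycle, ← Matrix.star_eq_conjTranspose,
      Matrix.mem_unitaryGroup_iff'.mp (hW u), one_mul]
    exact trace_xzPauli (by simpa using hu)

theorem union_oddNbhd_subset_iff {L D : Finset V} (hL : IsMLS G L)
    (hD : L = D ∪ oddNbhd G D) (hDu : ∀ E : Finset V, L = E ∪ oddNbhd G E → E = D)
    (E : Finset V) : E ∪ oddNbhd G E ⊆ L ↔ E = ∅ ∨ E = D := by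
  refine ⟨fun hE => ?_, ?_⟩
  · refine or_iff_not_imp_left.mpr fun hne => hDu E (hL.2 _ ⟨?_, E, rfl⟩ hE).symm
    exact (nonempty_iff_ne_empty.mpr hne).mono subset_union_left
  · rintro (rfl | rfl)
    · simp
    · exact hD.ge

theorem depolarizeOutside_conj_sum_pauliMatrix {W : V → Matrix (Fin 2) (Fin 2) ℂ}
    (hW : IsLocalUnitary W) {L D : Finset V} (hL : IsMLS G L)
    (hD : L = D ∪ oddNbhd G D) (hDu : ∀ E : Finset V, L = E ∪ oddNbhd G E → E = D) :
    depolarizeOutside L (tensor W * (∑ E, pauliMatrix G E) * (tensor W)ᴴ)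
      = 1 + tensor W * pauliMatrix G D * (tensor W)ᴴ := by
  have hD_ne : D ≠ ∅ := by
    rintro rfl
    simpa [hD] using hL.1.1
  simp only [Finset.mul_sum, Finset.sum_mul, map_sum, depolarizeOutside_conj_pauliMatrix hW,
    union_oddNbhd_subset_iff hL hD hDu]
  rw [← sum_filter, show univ.filter (fun E => E = ∅ ∨ E = D) = {∅, D} by ext; simp,
    sum_pair hD_ne.symm, pauliMatrix_empty, mul_one, tensor_mul_conjTranspose hW]

end MinimalLocalSets

theorem stmt_7 {V : Type} [Fintype V] [DecidableEq V] (G G' : SimpleGraph V)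
    (U : V → Matrix (Fin 2) (Fin 2) ℂ) (hU : IsLocalUnitary U)
    (h : graphState G = applyLocal U (graphState G'))
    (L D D' : Finset V)
    (hL : IsMLS G L) (hD : L = D ∪ oddNbhd G D)
    (hDu : ∀ E : Finset V, L = E ∪ oddNbhd G E → E = D)
    (hL' : IsMLS G' L) (hD' : L = D' ∪ oddNbhd G' D')
    (hD'u : ∀ E : Finset V, L = E ∪ oddNbhd G' E → E = D') :
    ∀ ψ : (V → Bool) → ℂ, pauliP G D (applyLocal U ψ) = applyLocal U (pauliP G' D' ψ) := by
  intro ψ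
  have hsum : tensor 1 * (∑ E, pauliMatrix G E) * (tensor 1)ᴴ
      = tensor U * (∑ E, pauliMatrix G' E) * (tensor U)ᴴ := by
    rw [tensor_one, conjTranspose_one, one_mul, mul_one, sum_pauliMatrix, sum_pauliMatrix,
      Matrix.mul_smul, Matrix.smul_mul, vecMulVec_graphState_eq_conj G h]
  have hconj : pauliMatrix G D = tensor U * pauliMatrix G' D' * (tensor U)ᴴ := by
    have h1 := congrArg (depolarizeOutside L) hsum
    rwa [depolarizeOutside_conj_sum_pauliMatrix isLocalUnitary_one hL hD hDu,
      depolarizeOutside_conj_sum_pauliMatrix hU hL' hD' hD'u, tensor_one, conjTranspose_one,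
      one_mul, mul_one, add_right_inj] at h1
  rw [pauliP_eq_mulVec, pauliP_eq_mulVec, applyLocal_eq_mulVec, applyLocal_eq_mulVec,
    Matrix.mulVec_mulVec, Matrix.mulVec_mulVec, hconj, mul_assoc, conjTranspose_tensor_mul hU,
    mul_one]
end

section
/- For any finite simple graph G on a linearly ordered vertex set (V, ≺), there exists a graph G' on V that is locally equivalent to G and is in standard form. -/
open Classical Real Matrix

/-!
Write the Pauli operator `𝒫_D^G` at a vertex `v` as a letter `(x, z) ∈ (ℤ/2)²`, with
`x = [v ∈ D]` and `z = |N_G(v) ∩ D| mod 2`; types `X`, `Y`, `Z` are the letters `(1, 0)`,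
`(1, 1)`, `(0, 1)`. Replacing `D` by `D Δ {a}` when `a ∈ Odd_G(D)` turns a generator of a local
set of `G` into a generator of the same set in `G ⋆ a`, and changes the letters by
`(x, z) ↦ (x + z, z)` at `a`, by `(x, z) ↦ (x, z + x)` on the neighbours of `a`, and not at all
elsewhere. So `G` and `G ⋆ a` have the same minimal local sets, and the types change by these
maps; the pivot `G ⋆ u ⋆ v ⋆ u` along an edge `uv` swaps `X` and `Z` at `u` and `v` and keeps
every other type.

Now minimise, over the local equivalence class of `G`, the number of `Y` vertices, then the
number of `X` vertices, then the sum of the ranks of the `X` vertices. At a minimum, an `X`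
vertex `u` has only `Z` neighbours `v`, for otherwise the pivot along `uv` removes `u` from the
`X` vertices without adding `v`; moreover `u ≺ v`, for otherwise the pivot exchanges `u` for the
smaller `v`. Hence a `Y` vertex has no `X` neighbour, and complementing at it would turn it into
a `Z` vertex without creating new `Y` vertices.
-/

open Finset

noncomputable section

section LocalComp

variable {V : Type} {G H : SimpleGraph V} {a v w : V}

theorem localComp_adj :
    (localComp G a).Adj v w ↔ v ≠ w ∧ ¬ (G.Adj v w ↔ G.Adj a v ∧ G.Adj a w) :=
  Iff.rfl

@[simp]
theorem localComp_adj_left : (localComp G a).Adj a v ↔ G.Adj a v := by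
  simp only [localComp_adj, G.loopless.irrefl a, false_and, iff_false, not_not]
  exact ⟨fun h => h.2, fun h => ⟨G.ne_of_adj h, h⟩⟩

@[simp]
theorem localComp_adj_right : (localComp G a).Adj v a ↔ G.Adj v a := by
  rw [SimpleGraph.adj_comm, localComp_adj_left, SimpleGraph.adj_comm]

@[simp]
theorem localComp_localComp_self (G : SimpleGraph V) (a : V) :
    localComp (localComp G a) a = G := by
  ext v w
  rw [localComp_adj, localComp_adj_left, localComp_adj_left, localComp_adj]
  by_cases hvw : v = w
  · simp [hvw]
  · tauto

def pivot (G : SimpleGraph V) (u v : V) : SimpleGraph V :=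
  localComp (localComp (localComp G u) v) u

theorem LocalEquiv.tail_localComp (h : LocalEquiv G H) (a : V) :
    LocalEquiv G (localComp H a) :=
  Relation.ReflTransGen.tail h ⟨a, rfl⟩

theorem LocalEquiv.tail_pivot (h : LocalEquiv G H) (u v : V) : LocalEquiv G (pivot H u v) :=
  ((h.tail_localComp u).tail_localComp v).tail_localComp u

end LocalComp

section PauliLetter

variable {V : Type} [DecidableEq V] {G : SimpleGraph V} {v : V} {D : Finset V}

/-- The exponents of `X` and `Z` at `v` in the Pauli operator `𝒫_D^G`. -/
def pauliLetter (G : SimpleGraph V) (D : Finset V) (v : V) : ZMod 2 × ZMod 2 :=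
  (if v ∈ D then 1 else 0, #{u ∈ D | G.Adj v u})

theorem pauliLetter_fst_eq_one : (pauliLetter G D v).1 = 1 ↔ v ∈ D := by
  by_cases h : v ∈ D <;> simp [pauliLetter, h]

theorem pauliLetter_fst_eq_zero : (pauliLetter G D v).1 = 0 ↔ v ∉ D := by
  by_cases h : v ∈ D <;> simp [pauliLetter, h]

theorem card_filter_adj_localComp (G : SimpleGraph V) (a v : V) (D : Finset V) :
    (#{u ∈ D | (localComp G a).Adj v u} : ZMod 2) = #{u ∈ D | G.Adj v u} +
      (if G.Adj a v then 1 else 0) * (#{u ∈ D | G.Adj a u} + if v ∈ D then 1 else 0) := by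
  have hv : (if v ∈ D then 1 else 0 : ZMod 2) = ∑ u ∈ D, if v = u then 1 else 0 :=
    (sum_ite_eq D v fun _ => 1).symm
  simp only [hv, ← sum_boole, ← sum_add_distrib, mul_sum]
  refine sum_congr rfl fun u _ => ?_
  by_cases huv : v = u <;> by_cases h1 : G.Adj v u <;> by_cases h2 : G.Adj a v <;>
    by_cases h3 : G.Adj a u <;> simp [localComp_adj, huv, h1, h2, h3] <;> decide

theorem card_filter_symmDiff_singleton (G : SimpleGraph V) (a v : V) (D : Finset V) :
    (#{u ∈ symmDiff D {a} | G.Adj v u} : ZMod 2) =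
      #{u ∈ D | G.Adj v u} + if G.Adj v a then 1 else 0 := by
  simp only [← sum_boole]
  by_cases ha : a ∈ D
  · have hD : symmDiff D {a} = D.erase a := by
      ext u; by_cases hu : u = a <;> simp [mem_symmDiff, hu, ha]
    rw [hD, ← sum_erase_add D _ ha, add_assoc, CharTwo.add_self_eq_zero, add_zero]
  · have hD : symmDiff D {a} = insert a D := by
      ext u; by_cases hu : u = a <;> simp [mem_symmDiff, hu, ha]
    rw [hD, sum_insert ha, add_comm]

variable [Fintype V]

theorem pauliLetter_snd_eq_one : (pauliLetter G D v).2 = 1 ↔ v ∈ oddNbhd G D := by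
  simp [pauliLetter, oddNbhd, ZMod.natCast_eq_one_iff_odd]

theorem pauliLetter_snd_eq_zero : (pauliLetter G D v).2 = 0 ↔ v ∉ oddNbhd G D := by
  simp [pauliLetter, oddNbhd, ZMod.natCast_eq_zero_iff_even]

theorem pauliLetter_eq_zero_iff : pauliLetter G D v = 0 ↔ v ∉ D ∪ oddNbhd G D := by
  rw [mem_union, ← pauliLetter_fst_eq_one, ← pauliLetter_snd_eq_one (G := G), Prod.ext_iff]
  generalize pauliLetter G D v = p
  revert p; decide

end PauliLetter

section LocalCompLetter

variable {V : Type} [DecidableEq V] {G : SimpleGraph V} {u v w : V} {p : ZMod 2 × ZMod 2}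

def localCompLetter (G : SimpleGraph V) (a v : V) (p : ZMod 2 × ZMod 2) : ZMod 2 × ZMod 2 :=
  if v = a then (p.1 + p.2, p.2) else if G.Adj a v then (p.1, p.2 + p.1) else p

theorem localCompLetter_zero (G : SimpleGraph V) (a v : V) : localCompLetter G a v 0 = 0 := by
  unfold localCompLetter
  split_ifs <;> rfl

theorem localCompLetter_involutive (G : SimpleGraph V) (a v : V) :
    Function.Involutive (localCompLetter G a v) := by
  intro p
  unfold localCompLetter
  split_ifs <;> simp [add_assoc, CharTwo.add_self_eq_zero]

theorem localCompLetter_eq_zero_iff {a : V} : localCompLetter G a v p = 0 ↔ p = 0 := by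
  rw [(localCompLetter_involutive G a v).eq_iff, localCompLetter_zero]

@[simp]
theorem localCompLetter_localComp (G : SimpleGraph V) (a : V) :
    localCompLetter (localComp G a) a = localCompLetter G a := by
  funext v p
  simp [localCompLetter]

theorem localCompLetter_pivot (huv : G.Adj u v) (w : V) (p : ZMod 2 × ZMod 2) :
    localCompLetter G u w (localCompLetter (localComp G u) v w
      (localCompLetter (localComp (localComp G u) v) u w p)) =
      if w = u ∨ w = v then p.swap else p := by
  have hvu : v ≠ u := (G.ne_of_adj huv).symm
  obtain ⟨x, z⟩ := p
  by_cases hwu : w = u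
  · subst hwu
    simp [localCompLetter, hvu.symm, huv.symm]
    revert x z; decide
  by_cases hwv : w = v
  · subst hwv
    simp [localCompLetter, hvu, huv]
    revert x z; decide
  by_cases h1 : G.Adj u w <;> by_cases h2 : G.Adj v w <;>
    simp [localCompLetter, localComp_adj, hwu, hwv, Ne.symm hwu, Ne.symm hwv, h1, h2, huv,
      huv.symm, add_assoc, CharTwo.add_self_eq_zero]

end LocalCompLetter

section Generators

variable {V : Type} [Fintype V] [DecidableEq V] {G : SimpleGraph V} {a : V} {L : Finset V}

def localCompGen (G : SimpleGraph V) (a : V) (D : Finset V) : Finset V :=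
  if a ∈ oddNbhd G D then symmDiff D {a} else D

theorem pauliLetter_localComp_localCompGen (G : SimpleGraph V) (a : V) (D : Finset V) (v : V) :
    pauliLetter (localComp G a) (localCompGen G a D) v =
      localCompLetter G a v (pauliLetter G D v) := by
  unfold localCompGen localCompLetter pauliLetter
  by_cases hodd : a ∈ oddNbhd G D
  · have hza : (#{u ∈ D | G.Adj a u} : ZMod 2) = 1 := pauliLetter_snd_eq_one.2 hodd
    rw [if_pos hodd, card_filter_symmDiff_singleton, card_filter_adj_localComp, hza]
    by_cases hv : v = a
    · subst hv
      by_cases hvD : v ∈ D <;> simp [hvD, mem_symmDiff, hza, CharTwo.add_self_eq_zero]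
    · by_cases h : G.Adj a v <;> by_cases hvD : v ∈ D <;>
        simp [hv, h, G.adj_comm v a, hvD, mem_symmDiff, add_assoc, CharTwo.add_self_eq_zero]
  · have hza : (#{u ∈ D | G.Adj a u} : ZMod 2) = 0 := pauliLetter_snd_eq_zero.2 hodd
    rw [if_neg hodd, card_filter_adj_localComp, hza]
    by_cases hv : v = a
    · subst hv
      simp [hza]
    · by_cases h : G.Adj a v <;> by_cases hvD : v ∈ D <;> simp [hv, h, hvD]

theorem localCompGen_union_oddNbhd (G : SimpleGraph V) (a : V) (D : Finset V) :
    localCompGen G a D ∪ oddNbhd (localComp G a) (localCompGen G a D) = D ∪ oddNbhd G D := by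
  ext v
  rw [← not_iff_not, ← pauliLetter_eq_zero_iff, ← pauliLetter_eq_zero_iff,
    pauliLetter_localComp_localCompGen, localCompLetter_eq_zero_iff]

theorem isLocalSet_localComp (h : IsLocalSet G L) (a : V) : IsLocalSet (localComp G a) L := by
  obtain ⟨hne, D, rfl⟩ := h
  exact ⟨hne, localCompGen G a D, (localCompGen_union_oddNbhd G a D).symm⟩

theorem isLocalSet_localComp_iff : IsLocalSet (localComp G a) L ↔ IsLocalSet G L :=
  ⟨fun h => by simpa using isLocalSet_localComp h a, fun h => isLocalSet_localComp h a⟩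

theorem isMLS_localComp_iff : IsMLS (localComp G a) L ↔ IsMLS G L := by
  simp only [IsMLS, isLocalSet_localComp_iff]

end Generators

section Types

variable {V : Type} [Fintype V] [DecidableEq V] {G : SimpleGraph V} {u v w : V}
  {p q : ZMod 2 × ZMod 2}

def HasType (G : SimpleGraph V) (v : V) (p : ZMod 2 × ZMod 2) : Prop :=
  (∃ L, IsMLS G L ∧ v ∈ L) ∧
    ∀ L D : Finset V, IsMLS G L → v ∈ L → L = D ∪ oddNbhd G D → pauliLetter G D v = p

theorem hasTypeX_iff : HasTypeX G v ↔ HasType G v (1, 0) := by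
  simp only [HasTypeX, HasType, Prod.ext_iff, pauliLetter_fst_eq_one, pauliLetter_snd_eq_zero]

theorem hasTypeY_iff : HasTypeY G v ↔ HasType G v (1, 1) := by
  simp only [HasTypeY, HasType, Prod.ext_iff, pauliLetter_fst_eq_one, pauliLetter_snd_eq_one]

theorem hasTypeZ_iff : HasTypeZ G v ↔ HasType G v (0, 1) := by
  simp only [HasTypeZ, HasType, Prod.ext_iff, pauliLetter_fst_eq_zero, pauliLetter_snd_eq_one]

theorem HasType.eq (h : HasType G v p) (h' : HasType G v q) : p = q := by
  obtain ⟨⟨L, hL, hvL⟩, hp⟩ := h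
  obtain ⟨D, hD⟩ := hL.1.2
  rw [← hp L D hL hvL hD, h'.2 L D hL hvL hD]

theorem HasType.not_of_ne (h : HasType G v p) (hpq : p ≠ q) : ¬ HasType G v q :=
  fun h' => hpq (h.eq h')

theorem hasType_localComp (h : HasType G v p) (a : V) :
    HasType (localComp G a) v (localCompLetter G a v p) := by
  obtain ⟨⟨L, hL, hvL⟩, hp⟩ := h
  refine ⟨⟨L, isMLS_localComp_iff.2 hL, hvL⟩, fun L D hL hvL hLD => ?_⟩
  set D' := localCompGen (localComp G a) a D
  have hLD' : L = D' ∪ oddNbhd G D' := by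
    rw [hLD, ← localCompGen_union_oddNbhd (localComp G a) a D, localComp_localComp_self]
  have key := pauliLetter_localComp_localCompGen (localComp G a) a D v
  rw [localComp_localComp_self, localCompLetter_localComp,
    hp L D' (isMLS_localComp_iff.1 hL) hvL hLD'] at key
  rw [key, localCompLetter_involutive]

theorem hasType_localComp_iff {a : V} :
    HasType (localComp G a) v p ↔ HasType G v (localCompLetter G a v p) := by
  constructor
  · intro h
    simpa using hasType_localComp h a
  · intro h
    simpa [localCompLetter_involutive G a v p] using hasType_localComp h a

theorem hasType_pivot_iff (huv : G.Adj u v) :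
    HasType (pivot G u v) w p ↔ HasType G w (if w = u ∨ w = v then p.swap else p) := by
  rw [pivot, hasType_localComp_iff, hasType_localComp_iff, hasType_localComp_iff,
    localCompLetter_pivot huv]

end Types

section StandardForm

variable {V : Type} [Fintype V] [LinearOrder V] {G : SimpleGraph V} {u v : V}

def typeSet (G : SimpleGraph V) (p : ZMod 2 × ZMod 2) : Finset V := {v | HasType G v p}

def standardFormMeasure (G : SimpleGraph V) : ℕ ×ₗ ℕ ×ₗ ℕ :=
  toLex (#(typeSet G (1, 1)), toLex (#(typeSet G (1, 0)), ∑ v ∈ typeSet G (1, 0), #{w | w < v}))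

@[simp]
theorem mem_typeSet {p : ZMod 2 × ZMod 2} : v ∈ typeSet G p ↔ HasType G v p := by
  simp [typeSet]

theorem typeSet_pivot_Y (huv : G.Adj u v) : typeSet (pivot G u v) (1, 1) = typeSet G (1, 1) := by
  ext w
  simp only [mem_typeSet, hasType_pivot_iff huv, Prod.swap_prod_mk, ite_self]

theorem mem_typeSet_pivot_X (huv : G.Adj u v) {w : V} :
    w ∈ typeSet (pivot G u v) (1, 0) ↔
      HasType G w (if w = u ∨ w = v then (0, 1) else (1, 0)) := by
  simp only [mem_typeSet, hasType_pivot_iff huv, Prod.swap_prod_mk]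

theorem standardFormMeasure_localComp_lt (hv : HasType G v (1, 1))
    (hX : ∀ w, G.Adj v w → ¬ HasType G w (1, 0)) :
    standardFormMeasure (localComp G v) < standardFormMeasure G := by
  have hY : ∀ w, HasType (localComp G v) w (1, 1) → w ≠ v ∧ HasType G w (1, 1) := by
    intro w hw
    rw [hasType_localComp_iff] at hw
    unfold localCompLetter at hw
    split_ifs at hw with hwv hvw
    · exact absurd hw (hwv ▸ hv.not_of_ne (by decide))
    · exact absurd (by simpa [CharTwo.add_self_eq_zero] using hw) (hX w hvw)
    · exact ⟨hwv, hw⟩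
  refine Prod.Lex.lt_iff.2 (Or.inl (card_lt_card ?_))
  refine (ssubset_iff_of_subset fun w hw => ?_).2 ⟨v, by simpa, fun h => ?_⟩
  · exact mem_typeSet.2 (hY w (mem_typeSet.1 hw)).2
  · exact (hY v (mem_typeSet.1 h)).1 rfl

theorem standardFormMeasure_pivot_lt_of_not_typeZ (huv : G.Adj u v) (hu : HasType G u (1, 0))
    (hv : ¬ HasType G v (0, 1)) :
    standardFormMeasure (pivot G u v) < standardFormMeasure G := by
  have hsub : typeSet (pivot G u v) (1, 0) ⊆ (typeSet G (1, 0)).erase u := by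
    intro w hw
    rw [mem_typeSet_pivot_X huv] at hw
    by_cases hwu : w = u
    · subst hwu
      exact absurd (by simpa using hw) (hu.not_of_ne (by decide))
    by_cases hwv : w = v
    · subst hwv
      exact absurd (by simpa using hw) hv
    · simp_all
  refine Prod.Lex.lt_iff.2 (Or.inr ⟨congrArg card (typeSet_pivot_Y huv), ?_⟩)
  exact Prod.Lex.lt_iff.2 (Or.inl ((card_le_card hsub).trans_lt (card_erase_lt_of_mem (by simpa))))

theorem standardFormMeasure_pivot_lt_of_lt (huv : G.Adj u v) (hu : HasType G u (1, 0))
    (hv : HasType G v (0, 1)) (hvu : v < u) :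
    standardFormMeasure (pivot G u v) < standardFormMeasure G := by
  have hu' : u ∈ typeSet G (1, 0) := by simpa
  have hv' : v ∉ (typeSet G (1, 0)).erase u := by simp [hv.not_of_ne (q := (1, 0)) (by decide)]
  have hX : typeSet (pivot G u v) (1, 0) = insert v ((typeSet G (1, 0)).erase u) := by
    ext w
    rw [mem_typeSet_pivot_X huv]
    by_cases hwu : w = u
    · subst hwu
      simpa [hvu.ne'] using hu.not_of_ne (by decide)
    by_cases hwv : w = v
    · subst hwv
      simpa using hv
    · simp [hwu, hwv]
  have hrank : #{w | w < v} < #{w | w < u} := by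
    refine card_lt_card ((ssubset_iff_of_subset fun w hw => ?_).2 ⟨v, ?_, ?_⟩) <;>
      simp_all [hvu.trans']
  refine Prod.Lex.lt_iff.2 (Or.inr ⟨congrArg card (typeSet_pivot_Y huv), ?_⟩)
  refine Prod.Lex.lt_iff.2 (Or.inr ⟨?_, ?_⟩) <;> dsimp only [standardFormMeasure, ofLex_toLex]
  · rw [hX, card_insert_of_notMem hv', card_erase_add_one hu']
  · rw [hX, sum_insert hv', ← sum_erase_add _ _ hu', add_comm]
    exact Nat.add_lt_add_left hrank _

end StandardForm

end

theorem stmt_11 {V : Type} [Fintype V] [LinearOrder V] (G : SimpleGraph V) :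
    ∃ G' : SimpleGraph V, LocalEquiv G G' ∧ StandardForm G' := by
  obtain ⟨H, hGH, hmin⟩ := (InvImage.wf standardFormMeasure wellFounded_lt).has_min
    {H | LocalEquiv G H} ⟨G, .refl⟩
  have hlc (a : V) : ¬ standardFormMeasure (localComp H a) < standardFormMeasure H :=
    hmin _ (hGH.tail_localComp a)
  have hpivot (u v : V) : ¬ standardFormMeasure (pivot H u v) < standardFormMeasure H :=
    hmin _ (hGH.tail_pivot u v)
  have hXZ {u v : V} (huv : H.Adj u v) (hu : HasType H u (1, 0)) : HasType H v (0, 1) :=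
    by_contra fun hv => hpivot u v (standardFormMeasure_pivot_lt_of_not_typeZ huv hu hv)
  refine ⟨H, hGH, fun v hv => ?_, fun u hu v huv => ?_⟩
  · rw [hasTypeY_iff] at hv
    exact hlc v (standardFormMeasure_localComp_lt hv fun w hvw hw =>
      hv.not_of_ne (by decide) (hXZ hvw.symm hw))
  · rw [hasTypeX_iff] at hu
    refine ⟨hasTypeZ_iff.2 (hXZ huv hu), lt_of_not_ge fun hvu => hpivot u v ?_⟩
    exact standardFormMeasure_pivot_lt_of_lt huv hu (hXZ huv hu)
      (hvu.lt_of_ne (H.ne_of_adj huv).symm)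
end

section
/- Let G_1 and G_2 be finite simple graphs on the same linearly ordered vertex set (V, ≺), both in standard form, and suppose |G_2⟩ = U |G_1⟩ where U is the local unitary acting by X(α_u) on each qubit u ∈ V_X^{G_1}, by Z(β_v) on each qubit v ∈ V_Z^{G_1}, and by the identity on all other qubits. Then: (i) for every v ∈ V_Z^{G_1}, β_v ≡ −Σ_{u ∈ N_{G_1}(v) ∩ V_X^{G_1}} α_u (mod 2π); (ii) for every k ∈ ℕ and every K ⊆ V_Z^{G_1} with |K| = k + 2, Σ_{u ∈ Λ_{G_1}^K ∩ V_X^{G_1}} α_u ≡ 0 (mod π/2^{k+δ(k)}), where δ(0) = 1 and δ(k) = 0 for k > 0. -/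
open Classical Real Matrix

/-!
Evaluate both sides of `|G₂⟩ = U |G₁⟩` at the basis vector `1_t` of a set `t` of Z-vertices.
The Z-rotations are diagonal, so only the qubits of X-vertices are summed over; since the
X-vertices are pairwise non-adjacent, `|G₁⟩` factorises over them, and the qubit of an X-vertex
`u` contributes `e^{iα_u}` or `1` according to the parity of `|N(u) ∩ t|`. As `|G₂⟩(1_t)` and
`|G₁⟩(1_t)` agree up to sign, `Σ_{v ∈ t} β_v + Σ_{u ∈ V_X, |N(u) ∩ t| odd} α_u` is congruent to
`π (|G₁[t]| + |G₂[t]|)` modulo `2π`. Part (i) is the case `t = {v}`. For part (ii) take the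
alternating sum over all `t ⊆ K`: the `β`-terms cancel, `α_u` survives with coefficient
`-2^{|K|-1}` exactly when `K ⊆ N(u)`, and when `|K| ≥ 3` the edge counts cancel as well,
leaving an even multiple of `π`.
-/

open Finset

section AlternatingSums

variable {α R : Type*} [DecidableEq α] [Ring R]

theorem Finset.sum_powerset_neg_one_pow_mul_eq_zero {K : Finset α} {c : α} (hc : c ∈ K)
    (f : Finset α → R) (hf : ∀ t ⊆ K.erase c, f (insert c t) = f t) :
    ∑ t ∈ K.powerset, (-1) ^ #t * f t = 0 := by
  rw [← insert_erase hc, sum_powerset_insert (notMem_erase c K), ← sum_add_distrib]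
  refine sum_eq_zero fun t ht => ?_
  rw [mem_powerset] at ht
  rw [hf t ht, card_insert_of_notMem fun h => notMem_erase c K (ht h), pow_succ]
  noncomm_ring

theorem Finset.sum_powerset_neg_one_pow_mul_ite_odd_card {K : Finset α} (hK : K.Nonempty) :
    ∑ t ∈ K.powerset, (-1 : R) ^ #t * (if Odd #t then 1 else 0) = -2 ^ (#K - 1) := by
  obtain ⟨c, hc⟩ := hK
  have hpair (n : ℕ) : (-1 : R) ^ n * (if Odd n then 1 else 0)
      + (-1) ^ (n + 1) * (if Odd (n + 1) then 1 else 0) = -1 := by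
    rcases n.even_or_odd with hn | hn
    · simp [hn.neg_one_pow, Nat.odd_add_one, Nat.not_odd_iff_even.2 hn, pow_succ]
    · simp [hn, hn.neg_one_pow, Nat.odd_add_one, pow_succ]
  have hterm : ∀ t ∈ (K.erase c).powerset,
      (-1 : R) ^ #t * (if Odd #t then 1 else 0)
        + (-1) ^ #(insert c t) * (if Odd #(insert c t) then 1 else 0) = -1 := by
    intro t ht
    rw [card_insert_of_notMem fun h => notMem_erase c K (mem_powerset.1 ht h)]
    exact hpair #t
  rw [← insert_erase hc, sum_powerset_insert (notMem_erase c K), ← sum_add_distrib,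
    sum_congr rfl hterm, sum_const, card_powerset, card_insert_of_notMem (notMem_erase c K),
    Nat.add_sub_cancel, card_erase_of_mem hc]
  simp

theorem Finset.sum_powerset_neg_one_pow_mul_ite_odd_card_filter {K : Finset α} (hK : K.Nonempty)
    (p : α → Prop) [DecidablePred p] :
    ∑ t ∈ K.powerset, (-1 : R) ^ #t * (if Odd #(t.filter p) then 1 else 0) =
      if ∀ a ∈ K, p a then -2 ^ (#K - 1) else 0 := by
  split_ifs with hp
  · rw [← sum_powerset_neg_one_pow_mul_ite_odd_card hK]
    refine sum_congr rfl fun t ht => ?_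
    rw [filter_true_of_mem fun a ha => hp a (mem_powerset.1 ht ha)]
  · obtain ⟨c, hc, hpc⟩ := not_forall₂.1 hp
    exact sum_powerset_neg_one_pow_mul_eq_zero hc _ fun t _ => by rw [filter_insert, if_neg hpc]

end AlternatingSums

section EdgeCount

variable {V : Type} [Fintype V] [DecidableEq V] (G : SimpleGraph V)

noncomputable def adjPairs (A : Finset V) : Finset (V × V) :=
  univ.filter fun p => G.Adj p.1 p.2 ∧ p.1 ∈ A ∧ p.2 ∈ A

theorem even_card_adjPairs (A : Finset V) : Even #(adjPairs G A) := by
  rw [← ZMod.natCast_eq_zero_iff_even, card_eq_sum_ones, Nat.cast_sum]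
  refine sum_involution (fun p _ => p.swap) (fun _ _ => by decide) (fun p hp _ => ?_)
    (fun p hp => ?_) (fun p _ => p.swap_swap)
  · simp only [adjPairs, mem_filter] at hp
    exact fun h => hp.2.1.ne (congrArg Prod.fst h).symm
  · simp only [adjPairs, mem_filter, mem_univ, true_and, Prod.fst_swap, Prod.snd_swap] at hp ⊢
    exact ⟨hp.1.symm, hp.2.2, hp.2.1⟩

theorem two_mul_edgeCount (A : Finset V) : 2 * edgeCount G A = #(adjPairs G A) :=
  Nat.two_mul_div_two_of_even (even_card_adjPairs G A)

theorem card_adjPairs (A : Finset V) : #(adjPairs G A) = ∑ a ∈ A, #(A.filter (G.Adj a)) := by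
  have hpairs : adjPairs G A = (A ×ˢ A).filter fun p => G.Adj p.1 p.2 := by
    ext p
    simp [adjPairs, and_comm]
  rw [hpairs, card_filter, sum_product]
  simp_rw [card_filter]

theorem edgeCount_singleton (v : V) : edgeCount G {v} = 0 := by
  simpa [card_adjPairs, filter_singleton] using two_mul_edgeCount G {v}

theorem edgeCount_union_of_isIndepSet {A T : Finset V} (hAT : Disjoint A T)
    (hT : G.IsIndepSet T) :
    edgeCount G (A ∪ T) = edgeCount G A + ∑ u ∈ T, #(A.filter (G.Adj · u)) := by
  have hTT : ∀ u ∈ T, #(T.filter (G.Adj u)) = 0 := fun u hu =>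
    card_eq_zero.2 <| filter_eq_empty_iff.2 fun v hv huv => hT hu hv huv.ne huv
  have hcross : ∑ a ∈ A, #(T.filter (G.Adj a)) = ∑ u ∈ T, #(A.filter (G.Adj · u)) :=
    sum_card_bipartiteAbove_eq_sum_card_bipartiteBelow _
  have hswap : ∑ u ∈ T, #(A.filter (G.Adj u)) = ∑ u ∈ T, #(A.filter (G.Adj · u)) := by
    simp_rw [G.adj_comm]
  have h2 := two_mul_edgeCount G (A ∪ T)
  simp_rw [card_adjPairs, filter_union, card_union_of_disjoint (disjoint_filter_filter hAT),
    sum_add_distrib] at h2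
  rw [sum_union hAT, sum_union hAT, sum_congr rfl hTT, sum_const_zero, add_zero,
    ← card_adjPairs, ← two_mul_edgeCount, hcross, hswap] at h2
  omega

theorem sum_powerset_neg_one_pow_mul_edgeCount {K : Finset V} (hK : 3 ≤ #K) :
    ∑ t ∈ K.powerset, (-1 : ℤ) ^ #t * edgeCount G t = 0 := by
  have hpair (p : V × V) : ∑ t ∈ K.powerset,
      (-1 : ℤ) ^ #t * (if G.Adj p.1 p.2 ∧ p.1 ∈ t ∧ p.2 ∈ t then 1 else 0) = 0 := by
    obtain ⟨c, hcK, hc⟩ := exists_mem_notMem_of_card_lt_card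
      ((card_le_two (a := p.1) (b := p.2)).trans_lt hK)
    simp only [mem_insert, mem_singleton, not_or] at hc
    refine sum_powerset_neg_one_pow_mul_eq_zero hcK _ fun t _ => ?_
    simp [Ne.symm hc.1, Ne.symm hc.2]
  have htwice (t : Finset V) : (2 * edgeCount G t : ℤ) =
      ∑ p : V × V, if G.Adj p.1 p.2 ∧ p.1 ∈ t ∧ p.2 ∈ t then 1 else 0 := by
    exact_mod_cast (two_mul_edgeCount G t).trans (card_filter _ _)
  have h2 : 2 * ∑ t ∈ K.powerset, (-1 : ℤ) ^ #t * edgeCount G t = 0 := by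
    simp_rw [mul_sum, mul_left_comm (2 : ℤ), htwice, mul_sum]
    rw [sum_comm]
    exact sum_eq_zero fun p _ => hpair p
  omega

end EdgeCount

section Rotations

open Complex

theorem boolIdx_injective : Function.Injective boolIdx := by
  decide

theorem Zrot_zero : Zrot 0 = 1 := by
  ext i j
  fin_cases i <;> fin_cases j <;> simp [Zrot]

theorem Zrot_apply_of_ne (θ : ℝ) {i j : Fin 2} (hij : i ≠ j) : Zrot θ i j = 0 := by
  fin_cases i <;> fin_cases j <;> simp_all [Zrot]

theorem Zrot_sum_boolIdx (θ : ℝ) (b : Bool) :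
    ∑ c, Zrot θ (boolIdx b) (boolIdx c) = if b then exp (I * θ) else 1 := by
  cases b <;> simp [Zrot, boolIdx]

theorem inv_ofReal_sqrt_two_mul_self : ((√2 : ℝ) : ℂ)⁻¹ * ((√2 : ℝ) : ℂ)⁻¹ = 2⁻¹ := by
  rw [← mul_inv, ← ofReal_mul, Real.mul_self_sqrt zero_le_two, ofReal_ofNat]

theorem Xrot_zero_zero (a : ℝ) : Xrot a 0 0 = (1 + exp (I * a)) / 2 := by
  simp only [Xrot, Hgate, Zrot, Matrix.mul_apply, Fin.sum_univ_two, Matrix.smul_apply, of_apply,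
    cons_val', cons_val_zero, cons_val_one, cons_val_fin_one, smul_eq_mul]
  linear_combination (1 + exp (I * a)) * inv_ofReal_sqrt_two_mul_self

theorem Xrot_zero_one (a : ℝ) : Xrot a 0 1 = (1 - exp (I * a)) / 2 := by
  simp only [Xrot, Hgate, Zrot, Matrix.mul_apply, Fin.sum_univ_two, Matrix.smul_apply, of_apply,
    cons_val', cons_val_zero, cons_val_one, cons_val_fin_one, smul_eq_mul]
  linear_combination (1 - exp (I * a)) * inv_ofReal_sqrt_two_mul_self

theorem Xrot_zero_zero_add_mul_neg_one_pow (a : ℝ) (n : ℕ) :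
    Xrot a 0 0 + Xrot a 0 1 * (-1) ^ n = if Odd n then exp (I * a) else 1 := by
  rw [Xrot_zero_zero, Xrot_zero_one]
  rcases n.even_or_odd with hn | hn
  · rw [hn.neg_one_pow, if_neg (Nat.not_odd_iff_even.2 hn)]
    ring
  · rw [hn.neg_one_pow, if_pos hn]
    ring

end Rotations

section RotationPhase

variable {V : Type} [Fintype V]

noncomputable def rotationPhase (G : SimpleGraph V) (X : V → Prop) (α θ : V → ℝ)
    (t : Finset V) : ℝ :=
  ∑ u ∈ univ.filter (fun u => X u ∧ Odd #(t.filter (G.Adj · u))), α u + ∑ v ∈ t, θ v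

theorem rotationPhase_singleton (G : SimpleGraph V) (X : V → Prop) (α θ : V → ℝ) (v : V) :
    rotationPhase G X α θ {v} = θ v + ∑ u ∈ univ.filter (fun u => G.Adj v u ∧ X u), α u := by
  rw [rotationPhase, sum_singleton, add_comm]
  congr 2
  ext u
  by_cases huv : G.Adj v u <;> simp [filter_singleton, huv, and_comm]

end RotationPhase

section GraphStateAction

open Complex

variable {V : Type} [Fintype V] [DecidableEq V]

theorem graphState_decide_mem (G : SimpleGraph V) (t : Finset V) :
    graphState G (fun v => decide (v ∈ t)) =
      (-1) ^ edgeCount G t / (√(2 ^ Fintype.card V) : ℝ) := by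
  simp [graphState]

theorem graphState_eq_mul_prod_of_eq_decide_mem (G : SimpleGraph V) {X : V → Prop}
    (hX : G.IsIndepSet {u | X u}) {t : Finset V} (ht : ∀ v ∈ t, ¬ X v) {y : V → Bool}
    (hy : ∀ u, ¬ X u → y u = decide (u ∈ t)) :
    graphState G y = graphState G (fun v => decide (v ∈ t)) *
      ∏ u, if X u ∧ y u = true then (-1) ^ #(t.filter (G.Adj · u)) else 1 := by
  set T := univ.filter fun u => X u ∧ y u = true
  have hsupp : univ.filter (fun v => y v = true) = t ∪ T := by
    ext v
    by_cases hv : X v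
    · simp [T, hv, show v ∉ t from fun h => ht v h hv]
    · simp [T, hv, hy v hv]
  have hdisj : Disjoint t T := disjoint_left.2 fun v hvt hvT => ht v hvt (mem_filter.1 hvT).2.1
  have hT : G.IsIndepSet T := fun u hu v hv => hX (mem_filter.1 hu).2.1 (mem_filter.1 hv).2.1
  rw [graphState_decide_mem, graphState, hsupp, edgeCount_union_of_isIndepSet G hdisj hT, pow_add,
    ← prod_filter, prod_pow_eq_pow_sum]
  ring

theorem applyLocal_graphState_decide_mem (G : SimpleGraph V) {X : V → Prop}
    (hX : G.IsIndepSet {u | X u}) (α θ : V → ℝ) {t : Finset V} (ht : ∀ v ∈ t, ¬ X v) :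
    applyLocal (fun u => if X u then Xrot (α u) else Zrot (θ u)) (graphState G)
        (fun v => decide (v ∈ t)) =
      exp (I * rotationPhase G X α θ t) * graphState G (fun v => decide (v ∈ t)) := by
  set x : V → Bool := fun v => decide (v ∈ t)
  set U : V → Matrix (Fin 2) (Fin 2) ℂ := fun u => if X u then Xrot (α u) else Zrot (θ u)
  set sign : V → Bool → ℂ := fun u b =>
    if X u ∧ b = true then (-1) ^ #(t.filter (G.Adj · u)) else 1
  set γ : V → ℝ := fun u =>
    (if X u ∧ Odd #(t.filter (G.Adj · u)) then α u else 0) + if u ∈ t then θ u else 0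
  have hterm (y : V → Bool) : (∏ u, U u (boolIdx (x u)) (boolIdx (y u))) * graphState G y =
      graphState G x * ∏ u, U u (boolIdx (x u)) (boolIdx (y u)) * sign u (y u) := by
    by_cases hy : ∀ u, ¬ X u → y u = x u
    · rw [graphState_eq_mul_prod_of_eq_decide_mem G hX ht hy, prod_mul_distrib]
      ring
    · obtain ⟨u, hu, hne⟩ := not_forall₂.1 hy
      have hzero : U u (boolIdx (x u)) (boolIdx (y u)) = 0 := by
        simp only [U, if_neg hu]
        exact Zrot_apply_of_ne _ (boolIdx_injective.ne (Ne.symm hne))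
      rw [prod_eq_zero (mem_univ u) hzero, prod_eq_zero (mem_univ u) (by rw [hzero, zero_mul])]
      ring
  have hfactor (u : V) : ∑ b, U u (boolIdx (x u)) (boolIdx b) * sign u b = exp (I * γ u) := by
    by_cases hu : X u
    · have hut : u ∉ t := fun h => ht u h hu
      simp only [U, sign, γ, x, hu, hut, decide_false, Fintype.sum_bool, boolIdx, true_and,
        if_true, if_false, Bool.false_eq_true, mul_one, add_zero]
      rw [add_comm, Xrot_zero_zero_add_mul_neg_one_pow]
      split_ifs <;> simp
    · simp only [U, sign, γ, hu, if_false, false_and, mul_one, zero_add, Zrot_sum_boolIdx, x]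
      by_cases hut : u ∈ t <;> simp [hut]
  have hγ : ∑ u, γ u = rotationPhase G X α θ t := by
    rw [rotationPhase, sum_add_distrib, sum_ite_mem, univ_inter, ← sum_filter]
  rw [applyLocal]
  simp_rw [hterm]
  rw [← mul_sum, ← Fintype.prod_sum fun u b => U u (boolIdx (x u)) (boolIdx b) * sign u b,
    prod_congr rfl fun u _ => hfactor u, ← Complex.exp_sum, ← mul_sum, ← hγ]
  push_cast
  ring

end GraphStateAction

section Phases

open Complex

variable {V : Type} [Fintype V] [DecidableEq V]

theorem exists_int_eq_of_neg_one_pow_eq_exp_mul {a b : ℕ} {φ : ℝ}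
    (h : (-1 : ℂ) ^ a = exp (I * φ) * (-1) ^ b) :
    ∃ m : ℤ, φ = π * (b + a) + m * (2 * π) := by
  have hsq : ((-1 : ℂ) ^ b) ^ 2 = 1 := by rw [← pow_mul, mul_comm, pow_mul, neg_one_sq, one_pow]
  have hexp : exp (I * φ) = exp ((b + a : ℕ) * (π * I)) := by
    rw [Complex.exp_nat_mul, exp_pi_mul_I, pow_add, h]
    linear_combination (-exp (I * φ)) * hsq
  obtain ⟨m, hm⟩ := exp_eq_exp_iff_exists_int.1 hexp
  refine ⟨m, ofReal_injective <| mul_left_cancel₀ I_ne_zero ?_⟩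
  push_cast at hm ⊢
  linear_combination hm

theorem exists_int_rotationPhase_eq {G₁ G₂ : SimpleGraph V} {X : V → Prop}
    (hX : G₁.IsIndepSet {u | X u}) {α θ : V → ℝ}
    (h : graphState G₂ =
      applyLocal (fun u => if X u then Xrot (α u) else Zrot (θ u)) (graphState G₁))
    {t : Finset V} (ht : ∀ v ∈ t, ¬ X v) :
    ∃ m : ℤ, rotationPhase G₁ X α θ t = π * (edgeCount G₁ t + edgeCount G₂ t) + m * (2 * π) := by
  have hx := congrFun h fun v => decide (v ∈ t)
  rw [applyLocal_graphState_decide_mem G₁ hX α θ ht, graphState_decide_mem,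
    graphState_decide_mem, mul_div_assoc',
    div_left_inj' (ofReal_ne_zero.2 (Real.sqrt_ne_zero'.2 (by positivity)))] at hx
  exact exists_int_eq_of_neg_one_pow_eq_exp_mul hx

theorem sum_powerset_neg_one_pow_mul_rotationPhase (G : SimpleGraph V) (X : V → Prop)
    (α θ : V → ℝ) {K : Finset V} (hK : 2 ≤ #K) :
    ∑ t ∈ K.powerset, (-1) ^ #t * rotationPhase G X α θ t =
      -2 ^ (#K - 1) * ∑ u ∈ (commonNbhd G K).filter X, α u := by
  have hK0 : K.Nonempty := card_pos.1 (by omega)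
  have hα : ∑ t ∈ K.powerset, (-1) ^ #t *
      ∑ u ∈ univ.filter (fun u => X u ∧ Odd #(t.filter (G.Adj · u))), α u =
      -2 ^ (#K - 1) * ∑ u ∈ (commonNbhd G K).filter X, α u := by
    have hterm (t : Finset V) : (-1) ^ #t *
        ∑ u ∈ univ.filter (fun u => X u ∧ Odd #(t.filter (G.Adj · u))), α u =
        ∑ u ∈ univ.filter X, α u * ((-1) ^ #t * if Odd #(t.filter (G.Adj · u)) then 1 else 0) := by
      rw [← filter_filter, sum_filter, mul_sum]
      exact sum_congr rfl fun u _ => by split_ifs <;> ring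
    simp_rw [hterm]
    rw [sum_comm]
    simp_rw [← mul_sum, sum_powerset_neg_one_pow_mul_ite_odd_card_filter hK0,
      mul_ite, mul_zero, ← sum_filter, ← sum_mul]
    rw [mul_comm]
    congr 2
    ext u
    simp [commonNbhd, and_comm]
  have hθ : ∑ t ∈ K.powerset, (-1) ^ #t * ∑ v ∈ t, θ v = 0 := by
    have hterm : ∀ t ∈ K.powerset, (-1) ^ #t * ∑ v ∈ t, θ v =
        ∑ v ∈ K, θ v * ((-1) ^ #t * if v ∈ t then 1 else 0) := by
      intro t ht
      have hsub : (-1) ^ #t * ∑ v ∈ t, θ v = ∑ v ∈ K, if v ∈ t then (-1) ^ #t * θ v else 0 := by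
        rw [sum_ite_mem, inter_eq_right.2 (mem_powerset.1 ht), mul_sum]
      rw [hsub]
      exact sum_congr rfl fun v _ => by split_ifs <;> ring
    rw [sum_congr rfl hterm, sum_comm]
    refine sum_eq_zero fun v _ => ?_
    obtain ⟨c, hcK, hcv⟩ := exists_mem_ne hK v
    rw [← mul_sum, sum_powerset_neg_one_pow_mul_eq_zero hcK _ fun t _ => ?_, mul_zero]
    simp [hcv.symm]
  simp_rw [rotationPhase, mul_add, sum_add_distrib, hα, hθ, add_zero]

theorem exists_int_sum_powerset_neg_one_pow_mul {G₁ G₂ : SimpleGraph V} {K : Finset V}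
    {φ : Finset V → ℝ}
    (hφ : ∀ t ∈ K.powerset, ∃ m : ℤ, φ t = π * (edgeCount G₁ t + edgeCount G₂ t) + m * (2 * π)) :
    ∃ N : ℤ, ∑ t ∈ K.powerset, (-1) ^ #t * φ t = N * π ∧ (3 ≤ #K → Even N) := by
  choose! m hm using hφ
  refine ⟨∑ t ∈ K.powerset, (-1) ^ #t * (edgeCount G₁ t + edgeCount G₂ t + 2 * m t), ?_,
    fun hK => ⟨∑ t ∈ K.powerset, (-1) ^ #t * m t, ?_⟩⟩
  · push_cast
    rw [sum_mul]
    exact sum_congr rfl fun t ht => by rw [hm t ht]; ring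
  · simp only [mul_add, sum_add_distrib, sum_powerset_neg_one_pow_mul_edgeCount _ hK]
    rw [zero_add, zero_add, ← two_mul, mul_sum]
    exact sum_congr rfl fun t _ => by ring

theorem exists_int_eq_mul_pi_div_two_pow {k : ℕ} {N : ℤ} {T : ℝ} (hT : N * π = -2 ^ (k + 1) * T)
    (hN : k ≠ 0 → Even N) : ∃ m : ℤ, T = m * (π / 2 ^ (k + kdelta k)) := by
  rcases k with _ | k
  · refine ⟨-N, ?_⟩
    rw [show 0 + kdelta 0 = 1 from rfl, mul_div_assoc', eq_div_iff (by positivity)]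
    push_cast
    linear_combination hT
  · obtain ⟨M, rfl⟩ := hN k.succ_ne_zero
    refine ⟨-M, ?_⟩
    rw [show k + 1 + kdelta (k + 1) = k + 1 from rfl, mul_div_assoc', eq_div_iff (by positivity)]
    push_cast at hT ⊢
    linear_combination hT / 2

end Phases

theorem HasTypeZ.not_hasTypeX {V : Type} [Fintype V] [DecidableEq V] {G : SimpleGraph V} {v : V}
    (hZ : HasTypeZ G v) : ¬ HasTypeX G v := by
  rintro ⟨-, hX⟩
  obtain ⟨⟨L, hL, hvL⟩, hZ⟩ := hZ
  obtain ⟨D, hD⟩ := hL.1.2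
  exact (hZ L D hL hvL hD).1 (hX L D hL hvL hD).1

theorem StandardForm.isIndepSet_hasTypeX {V : Type} [Fintype V] [LinearOrder V]
    {G : SimpleGraph V} (hG : StandardForm G) : G.IsIndepSet {u | HasTypeX G u} :=
  fun u hu v hv _ huv => (hG.2 u hu v huv).1.not_hasTypeX hv

theorem stmt_13_general {V : Type} [Fintype V] [LinearOrder V] (G₁ G₂ : SimpleGraph V)
    (h₁ : StandardForm G₁) (α β : V → ℝ)
    (h : graphState G₂ =
      applyLocal (fun u =>
        if HasTypeX G₁ u then Xrot (α u) else if HasTypeZ G₁ u then Zrot (β u) else 1)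
        (graphState G₁)) :
    (∀ v, HasTypeZ G₁ v →
      ∃ m : ℤ, β v + ∑ u ∈ Finset.univ.filter (fun u => G₁.Adj v u ∧ HasTypeX G₁ u), α u =
        (m : ℝ) * (2 * π)) ∧
    (∀ (k : ℕ) (K : Finset V), (∀ v ∈ K, HasTypeZ G₁ v) → K.card = k + 2 →
      ∃ m : ℤ, ∑ u ∈ (commonNbhd G₁ K).filter (fun u => HasTypeX G₁ u), α u =
        (m : ℝ) * (π / 2 ^ (k + kdelta k))) := by
  set θ : V → ℝ := fun v => if HasTypeZ G₁ v then β v else 0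
  have hU : (fun u => if HasTypeX G₁ u then Xrot (α u)
      else if HasTypeZ G₁ u then Zrot (β u) else 1) =
      fun u => if HasTypeX G₁ u then Xrot (α u) else Zrot (θ u) := by
    funext u
    by_cases hZ : HasTypeZ G₁ u <;> simp [θ, hZ, Zrot_zero]
  rw [hU] at h
  have hphase (t : Finset V) (ht : ∀ v ∈ t, HasTypeZ G₁ v) := exists_int_rotationPhase_eq
    h₁.isIndepSet_hasTypeX h fun v hv => (ht v hv).not_hasTypeX
  refine ⟨fun v hv => ?_, fun k K hK hcard => ?_⟩
  · obtain ⟨m, hm⟩ := hphase {v} (by simpa)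
    rw [rotationPhase_singleton, edgeCount_singleton, edgeCount_singleton] at hm
    exact ⟨m, by simpa [θ, hv] using hm⟩
  · obtain ⟨N, hN, hNeven⟩ := exists_int_sum_powerset_neg_one_pow_mul fun t ht =>
      hphase t fun v hv => hK v (mem_powerset.1 ht hv)
    have hsum := sum_powerset_neg_one_pow_mul_rotationPhase G₁ (HasTypeX G₁) α θ
      (hcard ▸ Nat.le_add_left 2 k)
    rw [hN, hcard, show k + 2 - 1 = k + 1 from rfl] at hsum
    exact exists_int_eq_mul_pi_div_two_pow hsum fun hk => hNeven (by omega)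

theorem stmt_13 {V : Type} [Fintype V] [LinearOrder V] (G₁ G₂ : SimpleGraph V)
    (h₁ : StandardForm G₁) (h₂ : StandardForm G₂) (α β : V → ℝ)
    (h : graphState G₂ =
      applyLocal (fun u =>
        if HasTypeX G₁ u then Xrot (α u) else if HasTypeZ G₁ u then Zrot (β u) else 1)
        (graphState G₁)) :
    (∀ v, HasTypeZ G₁ v →
      ∃ m : ℤ, β v + ∑ u ∈ Finset.univ.filter (fun u => G₁.Adj v u ∧ HasTypeX G₁ u), α u =
        (m : ℝ) * (2 * π)) ∧
    (∀ (k : ℕ) (K : Finset V), (∀ v ∈ K, HasTypeZ G₁ v) → K.card = k + 2 →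
      ∃ m : ℤ, ∑ u ∈ (commonNbhd G₁ K).filter (fun u => HasTypeX G₁ u), α u =
        (m : ℝ) * (π / 2 ^ (k + kdelta k))) :=
  stmt_13_general G₁ G₂ h₁ α β h
end
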